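/- arXiv:2110.00805 — 9 statements merged into one kernel-verified Lean document; each statement's English description precedes it below -/
import Mathlib

section
/- Let q be an odd prime power, r ≥ 2 an even integer, and N a positive integer dividing q^r - 1 with gcd((q^r-1)/(q-1), N) = 2. Then gcd(q-1, (q^r-1)/N) = 2(q-1)/N. -/
/-! Write `q ^ r - 1 = (q - 1) * D`. Multiplying by `N`, which divides `q ^ r - 1`, gives
`gcd(q - 1, (q ^ r - 1) / N) * N = gcd((q - 1) * N, (q - 1) * D) = (q - 1) * gcd(D, N) = 2 * (q - 1)`. -/

theorem Nat.gcd_mul_div_mul_eq_mul_gcd {a d n : ℕ} (h : n ∣ a * d) :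
    Nat.gcd a (a * d / n) * n = a * Nat.gcd d n := by
  rw [← Nat.gcd_mul_right, Nat.div_mul_cancel h, Nat.gcd_mul_left, Nat.gcd_comm]

theorem gcd_eq_two_mul_div_general (q r N : ℕ) (hN : 0 < N) (hNdvd : N ∣ q ^ r - 1)
    (hgcd : Nat.gcd ((q ^ r - 1) / (q - 1)) N = 2) :
    Nat.gcd (q - 1) ((q ^ r - 1) / N) = 2 * (q - 1) / N := by
  have hfactor : (q - 1) * ((q ^ r - 1) / (q - 1)) = q ^ r - 1 :=
    Nat.mul_div_cancel' (Nat.sub_one_dvd_pow_sub_one q r)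
  have key := Nat.gcd_mul_div_mul_eq_mul_gcd (hfactor ▸ hNdvd)
  rw [hfactor, hgcd, mul_comm (q - 1)] at key
  exact Nat.eq_div_of_mul_eq_left hN.ne' key

/-- Lemma 4.3 (part), eq. (4.4): under the paper's hypotheses,
`gcd(q-1, (q^r-1)/N) = 2(q-1)/N`. -/
theorem gcd_eq_two_mul_div (q r N : ℕ) (hq : IsPrimePow q) (hodd : Odd q)
    (hr : 2 ≤ r) (hre : Even r) (hN : 0 < N) (hNdvd : N ∣ q ^ r - 1)
    (hgcd : Nat.gcd ((q ^ r - 1) / (q - 1)) N = 2) :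
    Nat.gcd (q - 1) ((q ^ r - 1) / N) = 2 * (q - 1) / N :=
  gcd_eq_two_mul_div_general q r N hN hNdvd hgcd
end

section
/- Let q be an odd prime power, r ≥ 2 even, N | q^r - 1 with gcd((q^r-1)/(q-1), N) = 2. Then (N/2) divides q - 1. -/
theorem Nat.div_gcd_dvd_of_dvd_mul {n a b : ℕ} (h : n ∣ a * b) (hg : 0 < Nat.gcd a n) :
    n / Nat.gcd a n ∣ b := by
  rw [Nat.div_dvd_iff_dvd_mul (Nat.gcd_dvd_right a n) hg, Nat.gcd_comm]
  exact dvd_gcd_mul_of_dvd_mul h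

theorem half_N_dvd_q_sub_one_general (q r N : ℕ) (hNdvd : N ∣ q ^ r - 1)
    (hgcd : Nat.gcd ((q ^ r - 1) / (q - 1)) N = 2) :
    N / 2 ∣ q - 1 := by
  rw [← Nat.div_mul_cancel (Nat.sub_one_dvd_pow_sub_one q r)] at hNdvd
  simpa only [hgcd] using Nat.div_gcd_dvd_of_dvd_mul hNdvd (by omega)

/-- Eq. (4.6): under the paper's hypotheses, `N/2` divides `q - 1`. -/
theorem half_N_dvd_q_sub_one (q r N : ℕ) (hq : IsPrimePow q) (hodd : Odd q)
    (hr : 2 ≤ r) (hre : Even r) (hN : 0 < N) (hNdvd : N ∣ q ^ r - 1)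
    (hgcd : Nat.gcd ((q ^ r - 1) / (q - 1)) N = 2) :
    N / 2 ∣ q - 1 :=
  half_N_dvd_q_sub_one_general q r N hNdvd hgcd
end

section
/- Let q be an odd prime power, r ≥ 2 even, N | q^r - 1 with gcd((q^r-1)/(q-1), N) = 2, and let H be the multiplicative subgroup of F_{q^r}^* of order (q^r-1)/N. The group homomorphism φ: F_q^* × H → F_{q^r}^* given by φ(y,z) = yz has kernel {(h, h^{-1}) : h ∈ F_q^* ∩ H}, and F_q^* ∩ H is the subgroup of F_{q^r}^* of order 2(q-1)/N. -/
/-!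
`F_{q^r}^*` is cyclic, so each of its subgroups is the set of solutions of `x ^ m = 1` for `m` its
order; hence the intersection of the subgroups of orders `q - 1` and `(q^r - 1)/N` has order
`gcd(q - 1, (q^r - 1)/N)`. Writing `q^r - 1 = (q - 1) s`, multiplying this gcd by `N` gives
`gcd((q - 1) N, (q - 1) s) = (q - 1) gcd(s, N) = 2 (q - 1)`. The kernel description only says
that `yz = 1` forces `y = z⁻¹ ∈ H`.
-/

namespace IsCyclic

variable {G : Type*} [CommGroup G] [Finite G] [IsCyclic G]

theorem eq_ker_powMonoidHom_card (S : Subgroup G) :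
    S = (powMonoidHom (Nat.card S) : G →* G).ker := by
  refine Subgroup.eq_of_le_of_card_ge (fun x hx => ?_) ?_
  · rw [MonoidHom.mem_ker, powMonoidHom_apply]
    exact congrArg Subtype.val (pow_card_eq_one' (x := (⟨x, hx⟩ : S)))
  · rw [card_powMonoidHom_ker, Nat.gcd_eq_right S.card_subgroup_dvd_card]

theorem mem_iff_pow_card_eq_one (S : Subgroup G) (x : G) : x ∈ S ↔ x ^ Nat.card S = 1 := by
  conv_lhs => rw [eq_ker_powMonoidHom_card S]
  rfl

theorem card_inf (A B : Subgroup G) :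
    Nat.card (A ⊓ B : Subgroup G) = (Nat.card A).gcd (Nat.card B) := by
  have hAB : A ⊓ B = (powMonoidHom ((Nat.card A).gcd (Nat.card B)) : G →* G).ker := by
    ext x
    rw [Subgroup.mem_inf, mem_iff_pow_card_eq_one A, mem_iff_pow_card_eq_one B, MonoidHom.mem_ker,
      powMonoidHom_apply, pow_gcd_eq_one]
  rw [hAB, card_powMonoidHom_ker,
    Nat.gcd_eq_right ((Nat.gcd_dvd_left _ _).trans A.card_subgroup_dvd_card)]

end IsCyclic

theorem Subfield.mem_units_toSubmonoid {F : Type*} [Field F] (K : Subfield F) (u : Fˣ) :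
    u ∈ K.toSubmonoid.units ↔ (u : F) ∈ K :=
  ⟨And.left, fun h => ⟨h, by simpa using K.inv_mem h⟩⟩

theorem Subfield.card_units_toSubmonoid {F : Type*} [Field F] (K : Subfield F) :
    Nat.card K.toSubmonoid.units = Nat.card K - 1 :=
  (Nat.card_congr K.toSubmonoid.unitsEquivUnitsType.toEquiv).trans (Nat.card_units K)

theorem Nat.gcd_mul_div_of_dvd {d s N : ℕ} (hN : N ≠ 0) (hdvd : N ∣ d * s) :
    Nat.gcd d (d * s / N) = Nat.gcd s N * d / N := by
  refine Nat.eq_div_of_mul_eq_left hN ?_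
  calc Nat.gcd d (d * s / N) * N = Nat.gcd (d * N) (d * s / N * N) :=
        (Nat.gcd_mul_right _ _ _).symm
    _ = Nat.gcd (d * N) (d * s) := by rw [Nat.div_mul_cancel hdvd]
    _ = Nat.gcd s N * d := by rw [Nat.gcd_mul_left, Nat.gcd_comm, mul_comm]

theorem kernel_of_mul_hom_general (q r N : ℕ) (hN : 0 < N) (hNdvd : N ∣ q ^ r - 1)
    (hgcd : Nat.gcd ((q ^ r - 1) / (q - 1)) N = 2)
    (F : Type*) [Field F] [Fintype F]
    (K : Subfield F) (hK : Nat.card K = q)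
    (H : Subgroup Fˣ) (hH : Nat.card H = (q ^ r - 1) / N) :
    (∀ (y : Kˣ) (z : H), ((y : K) : F) * ((z : Fˣ) : F) = 1 ↔
      ∃ h : Fˣ, (h : F) ∈ K ∧ h ∈ H ∧ ((y : K) : F) = (h : F) ∧ (z : Fˣ) = h⁻¹) ∧
    Nat.card {h : Fˣ // (h : F) ∈ K ∧ h ∈ H} = 2 * (q - 1) / N := by
  refine ⟨fun y z => ⟨fun hyz => ?_, ?_⟩, ?_⟩
  · have hy : ((y : K) : F) = (((z : Fˣ)⁻¹ : Fˣ) : F) := by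
      rw [Units.val_inv_eq_inv_val]
      exact eq_inv_of_mul_eq_one_left hyz
    exact ⟨(z : Fˣ)⁻¹, hy ▸ (y : K).2, H.inv_mem z.2, hy, (inv_inv _).symm⟩
  · rintro ⟨h, -, -, hy, hz⟩
    rw [hy, hz, Units.mul_inv]
  · have hsub :
        Nat.card {h : Fˣ // (h : F) ∈ K ∧ h ∈ H} = Nat.card ↥(K.toSubmonoid.units ⊓ H) :=
      Nat.card_congr <| Equiv.subtypeEquivRight fun h => by
        rw [Subgroup.mem_inf, K.mem_units_toSubmonoid]
    have hfactor : q ^ r - 1 = (q - 1) * ((q ^ r - 1) / (q - 1)) :=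
      (Nat.mul_div_cancel' (Nat.sub_one_dvd_pow_sub_one q r)).symm
    rw [hsub, IsCyclic.card_inf, K.card_units_toSubmonoid, hK, hH, hfactor,
      Nat.gcd_mul_div_of_dvd hN.ne' (hfactor ▸ hNdvd), hgcd]

/-- Lemma 4.3: the kernel of the multiplication homomorphism
`φ : F_q^* × H → F_{q^r}^*`, `(y,z) ↦ yz`, consists of the pairs `(h, h⁻¹)` with
`h ∈ F_q^* ∩ H`, and `F_q^* ∩ H` has order `2(q-1)/N`. -/
theorem kernel_of_mul_hom (q r N : ℕ) (hq : IsPrimePow q) (hodd : Odd q)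
    (hr : 2 ≤ r) (hre : Even r) (hN : 0 < N) (hNdvd : N ∣ q ^ r - 1)
    (hgcd : Nat.gcd ((q ^ r - 1) / (q - 1)) N = 2)
    (F : Type*) [Field F] [Fintype F] (hF : Fintype.card F = q ^ r)
    (K : Subfield F) (hK : Nat.card K = q)
    (H : Subgroup Fˣ) (hH : Nat.card H = (q ^ r - 1) / N) :
    (∀ (y : Kˣ) (z : H), ((y : K) : F) * ((z : Fˣ) : F) = 1 ↔
      ∃ h : Fˣ, (h : F) ∈ K ∧ h ∈ H ∧ ((y : K) : F) = (h : F) ∧ (z : Fˣ) = h⁻¹) ∧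
    Nat.card {h : Fˣ // (h : F) ∈ K ∧ h ∈ H} = 2 * (q - 1) / N :=
  kernel_of_mul_hom_general q r N hN hNdvd hgcd F K hK H hH
end

section
/- Under the above hypotheses, the image of the map φ: F_q^* × H → F_{q^r}^*, φ(y,z) = yz, is exactly the set of nonzero squares of F_{q^r}, i.e., the subgroup of index 2 in F_{q^r}^*; moreover each element of the image has exactly 2(q-1)/N preimages. -/
/-!
`F_{q^r}^*` is cyclic, so each subgroup `A` is the group of `A.index`-th powers and the index of
`A ⊔ B` is `gcd(A.index, B.index)`. The image of `φ` is `F_q^* ⊔ H`, and the indices of `F_q^*`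
and `H` are `(q^r-1)/(q-1)` and `N`; so the image has index 2 and is the group of squares. The
fibres of `φ` over its image are cosets of `ker φ`, of size `(q-1)|H| / ((q^r-1)/2) = 2(q-1)/N`.
-/

namespace IsCyclic

variable {G : Type*} [CommGroup G] [IsCyclic G] [Finite G]

theorem range_powMonoidHom_eq_ker {d : ℕ} (hd : d ∣ Nat.card G) :
    (powMonoidHom d : G →* G).range = (powMonoidHom (Nat.card G / d)).ker := by
  refine Subgroup.eq_of_le_of_card_ge ?_ ?_
  · rintro _ ⟨x, rfl⟩
    simp [← pow_mul, Nat.mul_div_cancel' hd, pow_card_eq_one']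
  · rw [card_powMonoidHom_range, card_powMonoidHom_ker, Nat.gcd_eq_right hd,
      Nat.gcd_eq_right (Nat.div_dvd_of_dvd hd)]

theorem index_range_powMonoidHom {d : ℕ} (hd : d ∣ Nat.card G) :
    (powMonoidHom d : G →* G).range.index = d := by
  rw [index_powMonoidHom_range, Nat.gcd_eq_right hd]

theorem le_range_powMonoidHom_of_dvd_index {A : Subgroup G} {d : ℕ} (hd : d ∣ A.index) :
    A ≤ (powMonoidHom d : G →* G).range := by
  have hdG : d ∣ Nat.card G := hd.trans A.index_dvd_card
  obtain ⟨k, hk⟩ := hd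
  have hexp : Nat.card G / d = Nat.card A * k := by
    refine Nat.div_eq_of_eq_mul_left (Nat.pos_of_dvd_of_pos hdG Nat.card_pos) ?_
    rw [← A.card_mul_index, hk]
    ring
  intro a ha
  have ha1 : a ^ Nat.card A = 1 := orderOf_dvd_iff_pow_eq_one.mp (A.orderOf_dvd_natCard ha)
  rw [range_powMonoidHom_eq_ker hdG, MonoidHom.mem_ker, powMonoidHom_apply, hexp, pow_mul, ha1,
    one_pow]

theorem eq_range_powMonoidHom_index (A : Subgroup G) :
    A = (powMonoidHom A.index : G →* G).range := by
  refine Subgroup.eq_of_le_of_card_ge (le_range_powMonoidHom_of_dvd_index (A := A) dvd_rfl) ?_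
  rw [card_powMonoidHom_range, Nat.gcd_eq_right A.index_dvd_card, ← A.card_mul_index,
    Nat.mul_div_cancel _ (Nat.pos_of_ne_zero A.index_ne_zero_of_finite)]

theorem index_sup (A B : Subgroup G) : (A ⊔ B).index = Nat.gcd A.index B.index := by
  refine Nat.dvd_antisymm (Nat.dvd_gcd (Subgroup.index_dvd_of_le le_sup_left)
    (Subgroup.index_dvd_of_le le_sup_right)) ?_
  have hle : A ⊔ B ≤ (powMonoidHom (Nat.gcd A.index B.index) : G →* G).range :=
    sup_le (le_range_powMonoidHom_of_dvd_index (Nat.gcd_dvd_left _ _))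
      (le_range_powMonoidHom_of_dvd_index (Nat.gcd_dvd_right _ _))
  simpa [index_range_powMonoidHom ((Nat.gcd_dvd_left _ _).trans A.index_dvd_card)] using
    Subgroup.index_dvd_of_le hle

end IsCyclic

theorem range_powMonoidHom_two_eq_square (G : Type*) [CommGroup G] :
    (powMonoidHom 2 : G →* G).range = Subgroup.square G := by
  ext x
  simp [IsSquare, sq, eq_comm]

theorem Subgroup.index_eq_card_div_card {G : Type*} [Group G] [Finite G] (H : Subgroup G) :
    H.index = Nat.card G / Nat.card H :=
  (Nat.div_eq_of_eq_mul_right Nat.card_pos H.card_mul_index.symm).symm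

theorem MonoidHom.range_coprod {A B G : Type*} [Group A] [Group B] [CommGroup G]
    (f : A →* G) (g : B →* G) : (f.coprod g).range = f.range ⊔ g.range := by
  ext x
  simp [Subgroup.mem_sup]

theorem MonoidHom.card_ker_mul_card {P G : Type*} [Group P] [Group G] (f : P →* G) :
    Nat.card f.ker * Nat.card G = Nat.card P * f.range.index := by
  rw [← f.range.card_mul_index, ← Subgroup.index_ker, ← mul_assoc, Subgroup.card_mul_index]

theorem Subfield.index_range_unitsMap_subtype {F : Type*} [Field F] [Finite F] (K : Subfield F) :
    (Units.map K.subtype.toMonoidHom).range.index = (Nat.card F - 1) / (Nat.card K - 1) := by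
  rw [Subgroup.index_eq_card_div_card, ← Nat.card_congr (MonoidHom.ofInjective
    (Units.map_injective K.subtype.injective)).toEquiv, Nat.card_units, Nat.card_units]

theorem MonoidHom.card_fiber_eq_card_ker {G G' : Type*} [Group G] [Group G'] (f : G →* G')
    {x : G'} (hx : x ∈ f.range) : Nat.card {g // f g = x} = Nat.card f.ker := by
  obtain ⟨a, rfl⟩ := hx
  exact Nat.card_congr (f.fiberEquivKer a)

theorem image_of_mul_hom_general (q r N : ℕ) (hN : 0 < N) (hNdvd : N ∣ q ^ r - 1)
    (hgcd : Nat.gcd ((q ^ r - 1) / (q - 1)) N = 2)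
    (F : Type*) [Field F] [Fintype F] (hF : Fintype.card F = q ^ r)
    (K : Subfield F) (hK : Nat.card K = q)
    (H : Subgroup Fˣ) (hH : Nat.card H = (q ^ r - 1) / N) :
    ∀ x : Fˣ,
      ((∃ (y : Kˣ) (z : H), ((y : K) : F) * ((z : Fˣ) : F) = (x : F)) ↔ IsSquare x) ∧
      (IsSquare x →
        Nat.card {p : Kˣ × H // ((p.1 : K) : F) * ((p.2 : Fˣ) : F) = (x : F)} =
          2 * (q - 1) / N) := by
  have hcardF : Nat.card Fˣ = q ^ r - 1 := by
    rw [Nat.card_units, Nat.card_eq_fintype_card, hF]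
  have hM : 0 < q ^ r - 1 := hcardF ▸ Nat.card_pos
  let ι : Kˣ →* Fˣ := Units.map K.subtype.toMonoidHom
  have hsupIndex : (ι.range ⊔ H).index = 2 := by
    rw [IsCyclic.index_sup, K.index_range_unitsMap_subtype, Subgroup.index_eq_card_div_card,
      hcardF, hH, Nat.div_div_self hNdvd hM.ne', Nat.card_eq_fintype_card, hF, hK, hgcd]
  let ψ : Kˣ × H →* Fˣ := ι.coprod H.subtype
  have hψsup : ψ.range = ι.range ⊔ H := by
    rw [MonoidHom.range_coprod, H.range_subtype]
  have hψsquare : ψ.range = Subgroup.square Fˣ := by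
    rw [hψsup, IsCyclic.eq_range_powMonoidHom_index (ι.range ⊔ H), hsupIndex,
      range_powMonoidHom_two_eq_square]
  have hψ (p : Kˣ × H) (x : Fˣ) : ((p.1 : K) : F) * ((p.2 : Fˣ) : F) = (x : F) ↔ ψ p = x := by
    rw [Units.ext_iff]; rfl
  intro x
  constructor
  · rw [← Subgroup.mem_square, ← hψsquare, MonoidHom.mem_range, Prod.exists]
    exact exists₂_congr fun y z => hψ (y, z) x
  intro hx
  rw [Nat.card_congr (Equiv.subtypeEquivRight (hψ · x)), ψ.card_fiber_eq_card_ker (hψsquare ▸ hx)]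
  have hker := ψ.card_ker_mul_card
  rw [hcardF, Nat.card_prod, Nat.card_units, hK, hH, hψsup, hsupIndex] at hker
  refine (Nat.div_eq_of_eq_mul_left hN (Nat.eq_of_mul_eq_mul_right hM ?_)).symm
  calc 2 * (q - 1) * (q ^ r - 1) = 2 * (q - 1) * ((q ^ r - 1) / N * N) := by
        rw [Nat.div_mul_cancel hNdvd]
    _ = Nat.card ψ.ker * N * (q ^ r - 1) := by rw [mul_right_comm _ N, hker]; ring

/-- The image of `φ : F_q^* × H → F_{q^r}^*`, `(y,z) ↦ yz`, is exactly the set of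
nonzero squares of `F_{q^r}`, and every element of the image has exactly
`2(q-1)/N` preimages. -/
theorem image_of_mul_hom (q r N : ℕ) (hq : IsPrimePow q) (hodd : Odd q)
    (hr : 2 ≤ r) (hre : Even r) (hN : 0 < N) (hNdvd : N ∣ q ^ r - 1)
    (hgcd : Nat.gcd ((q ^ r - 1) / (q - 1)) N = 2)
    (F : Type*) [Field F] [Fintype F] (hF : Fintype.card F = q ^ r)
    (K : Subfield F) (hK : Nat.card K = q)
    (H : Subgroup Fˣ) (hH : Nat.card H = (q ^ r - 1) / N) :
    ∀ x : Fˣ,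
      ((∃ (y : Kˣ) (z : H), ((y : K) : F) * ((z : Fˣ) : F) = (x : F)) ↔ IsSquare x) ∧
      (IsSquare x →
        Nat.card {p : Kˣ × H // ((p.1 : K) : F) * ((p.2 : Fˣ) : F) = (x : F)} =
          2 * (q - 1) / N) :=
  image_of_mul_hom_general q r N hN hNdvd hgcd F hF K hK H hH
end

section
/- Let F_{q^r} be a finite field of odd characteristic with r even, η a primitive element, N even with N | q^r - 1 and gcd((q^r-1)/(q-1), N) = 2, and 2 ≤ b ≤ r. Then the set {1, η^N, η^{2N}, ..., η^{(b-1)N}} is linearly independent over F_q. -/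
open IntermediateField Module

set_option synthInstance.maxHeartbeats 1000000
set_option maxHeartbeats 1000000

/-- The set `{1, η^N, η^{2N}, …, η^{(b-1)N}}` is linearly independent over `F_q`,
where `η` is a primitive element of `F_{q^r}`, `2 ≤ b ≤ r`, and
`gcd((q^r-1)/(q-1), N) = 2`. -/
theorem powers_linearIndependent (q r N b : ℕ) (hq : IsPrimePow q) (hodd : Odd q)
    (hr : 2 ≤ r) (hre : Even r) (hN : 0 < N) (hNeven : Even N) (hNdvd : N ∣ q ^ r - 1)
    (hgcd : Nat.gcd ((q ^ r - 1) / (q - 1)) N = 2)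
    (hb : 2 ≤ b) (hbr : b ≤ r)
    (F : Type*) [Field F] [Fintype F] (hF : Fintype.card F = q ^ r)
    (K : Subfield F) (hK : Nat.card K = q)
    (η : Fˣ) (hη : ∀ x : Fˣ, x ∈ Subgroup.zpowers η) :
    LinearIndependent ↥K (fun j : Fin b => ((η : F)) ^ (N * (j : ℕ))) := by
  classical
  have hq2 : 2 ≤ q := hq.two_le
  have hq3 : 3 ≤ q := by
    rcases Nat.lt_or_ge q 3 with h | h
    · interval_cases q
      · exact absurd hodd (by decide)
    · exact h
  haveI : Fintype K := Fintype.ofFinite _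
  have hcardK : Fintype.card K = q := by
    rw [← Nat.card_eq_fintype_card]; exact hK
  haveI : FiniteDimensional K F := Module.Finite.of_finite
  -- finrank K F = r
  have hfr : Module.finrank K F = r := by
    have h1 : Fintype.card F = Fintype.card K ^ Module.finrank K F :=
      card_eq_pow_finrank
    rw [hF, hcardK] at h1
    exact (Nat.pow_right_injective hq2 h1.symm)
  set θ : F := (η : F) ^ N with hθ
  have hint : IsIntegral K θ := IsIntegral.of_finite K θ
  set d : ℕ := (minpoly K θ).natDegree with hd
  -- finrank of K⟮θ⟯
  have hfr2 : Module.finrank K K⟮θ⟯ = d := adjoin.finrank hint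
  have hd1 : 1 ≤ d := minpoly.natDegree_pos hint
  have hddvd : d ∣ r := by
    rw [← hfr, ← hfr2]
    exact ⟨Module.finrank K⟮θ⟯ F, (Module.finrank_mul_finrank K K⟮θ⟯ F).symm⟩
  -- order of η and θ
  have hordη : orderOf η = q ^ r - 1 := by
    rw [orderOf_eq_card_of_forall_mem_zpowers hη, Nat.card_eq_fintype_card, Fintype.card_units, hF]
  have hordu : orderOf (η ^ N) = (q ^ r - 1) / N := by
    rw [orderOf_pow, hordη, Nat.gcd_eq_right hNdvd]
  -- θ ^ (q^d - 1) = 1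
  haveI : Fintype K⟮θ⟯ := Fintype.ofFinite _
  have hcard2 : Fintype.card K⟮θ⟯ = q ^ d := by
    have h1 : Fintype.card K⟮θ⟯ = Fintype.card K ^ Module.finrank K K⟮θ⟯ :=
      card_eq_pow_finrank
    rw [hcardK, hfr2] at h1
    exact h1
  have hθne : θ ≠ 0 := by
    apply pow_ne_zero
    exact (η : Fˣ).ne_zero
  have hpow1 : θ ^ (q ^ d - 1) = 1 := by
    have hx : (IntermediateField.AdjoinSimple.gen K θ) ^ (Fintype.card K⟮θ⟯ - 1) = 1 := by
      apply FiniteField.pow_card_sub_one_eq_one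
      intro h
      apply hθne
      have := congrArg (algebraMap K⟮θ⟯ F) h
      simpa using this
    rw [hcard2] at hx
    have := congrArg (algebraMap K⟮θ⟯ F) hx
    simpa using this
  -- so orderOf (η^N) ∣ q^d - 1
  have hdvd : (q ^ r - 1) / N ∣ q ^ d - 1 := by
    rw [← hordu]
    apply orderOf_dvd_of_pow_eq_one
    apply Units.ext
    push_cast
    exact hpow1
  -- arithmetic: d = r
  have hdr : d = r := by
    by_contra hne
    have hdlt : d < r := lt_of_le_of_ne (Nat.le_of_dvd (by omega) hddvd) hne
    have hqr1 : 2 ≤ q ^ r := by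
      calc 2 ≤ q := hq2
      _ = q ^ 1 := (pow_one q).symm
      _ ≤ q ^ r := Nat.pow_le_pow_right (by omega) (by omega)
    have hqd1 : 2 ≤ q ^ d := by
      calc 2 ≤ q := hq2
      _ = q ^ 1 := (pow_one q).symm
      _ ≤ q ^ d := Nat.pow_le_pow_right (by omega) hd1
    -- q^d - 1 ∣ q^r - 1
    have hsub : q ^ d - 1 ∣ q ^ r - 1 := by
      obtain ⟨k, hk⟩ := hddvd
      have := Nat.sub_dvd_pow_sub_pow (q ^ d) 1 k
      rwa [one_pow, ← pow_mul, ← hk] at this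
    set M : ℕ := (q ^ r - 1) / (q ^ d - 1) with hM
    have hMeq : M * (q ^ d - 1) = q ^ r - 1 := Nat.div_mul_cancel hsub
    -- q^r - 1 ∣ N * (q^d - 1)
    have h2 : q ^ r - 1 ∣ N * (q ^ d - 1) := by
      have h3 : N * ((q ^ r - 1) / N) ∣ N * (q ^ d - 1) :=
        mul_dvd_mul_left N hdvd
      rwa [Nat.mul_div_cancel' hNdvd] at h3
    -- M ∣ N
    have hMN : M ∣ N := by
      have h4 : M * (q ^ d - 1) ∣ N * (q ^ d - 1) := hMeq ▸ h2
      exact (Nat.mul_dvd_mul_iff_right (by omega : 0 < q ^ d - 1)).mp h4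
    -- M ∣ (q^r-1)/(q-1)
    have hMe : M ∣ (q ^ r - 1) / (q - 1) := by
      rw [Nat.dvd_div_iff_mul_dvd]
      · have hq1d : q - 1 ∣ q ^ d - 1 := by
          have := Nat.sub_dvd_pow_sub_pow q 1 d
          rwa [one_pow] at this
        calc (q - 1) * M ∣ (q ^ d - 1) * M := mul_dvd_mul_right hq1d M
        _ = q ^ r - 1 := by rw [mul_comm]; exact hMeq
      · have := Nat.sub_dvd_pow_sub_pow q 1 r
        rwa [one_pow] at this
    have hMle : M ≤ 2 := by
      have : M ∣ 2 := hgcd ▸ Nat.dvd_gcd hMe hMN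
      exact Nat.le_of_dvd (by omega) this
    -- lower bound M ≥ q^(r-d) ≥ 3
    have hMpos : 1 ≤ M := by
      rcases Nat.eq_zero_or_pos M with h | h
      · rw [h] at hMeq; omega
      · exact h
    have hlow : q ^ (r - d) ≤ M := by
      have h5 : q ^ (r - d) * q ^ d ≤ M * q ^ d := by
        rw [← pow_add]
        have : r - d + d = r := by omega
        rw [this]
        calc q ^ r = q ^ r - 1 + 1 := by omega
        _ = M * (q ^ d - 1) + 1 := by rw [hMeq]
        _ ≤ M * (q ^ d - 1) + M := by omega
        _ = M * q ^ d := by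
              have hMle' : M ≤ M * q ^ d := Nat.le_mul_of_pos_right M (by omega)
              rw [Nat.mul_sub, Nat.mul_one]; omega
      exact Nat.le_of_mul_le_mul_right h5 (by omega)
    have : 3 ≤ q ^ (r - d) := by
      calc 3 ≤ q := hq3
      _ = q ^ 1 := (pow_one q).symm
      _ ≤ q ^ (r - d) := Nat.pow_le_pow_right (by omega) (by omega)
    omega
  -- linear independence
  have hli : LinearIndependent K (fun i : Fin d => θ ^ (i : ℕ)) :=
    linearIndependent_pow θ
  have hble : b ≤ d := hdr ▸ hbr
  have := hli.comp (fun j : Fin b => (⟨(j : ℕ), lt_of_lt_of_le j.2 hble⟩ : Fin d))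
    (fun i j hij => by
      apply Fin.ext
      simpa using congrArg Fin.val hij)
  convert this using 1
  funext j
  simp [Function.comp, hθ, pow_mul]
end

section
/- Let q be an odd prime power, r ≥ 2 even, N | q^r - 1 with gcd((q^r-1)/(q-1), N) = 2, η a primitive element of F_{q^r}, and b = r. Define P(r) as a set of representatives for the F_q-lines through the elements 1, η^N, ..., η^{(r-1)N}: P(r) = ⋃_{j=1}^{r-1} { η^{(j-1)N} + x_1 η^{jN} + ... + x_{r-j} η^{(r-1)N} : x_i ∈ F_q } ∪ {η^{(r-1)N}}, a set of cardinality (q^r-1)/(q-1). Then the number of elements of P(r) that are squares in F_{q^r}^* equals (q^r-1)/(2(q-1)), i.e., exactly half. -/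
/-!
Put `θ = η ^ N`. If `K⟮θ⟯` had degree `s < r` over `K = 𝔽_q`, then `θ ^ (q ^ s - 1) = 1`, so
`q ^ r - 1 ∣ N (q ^ s - 1)`, and `(q ^ r - 1) / (q ^ s - 1) ≥ q ^ s + 1 > 2` would divide both
`N` and `(q ^ r - 1) / (q - 1)`. Hence `1, θ, …, θ ^ (r - 1)` is a `K`-basis, and `P(r)` is the
set of vectors whose first nonzero coordinate is `1`: every nonzero vector is uniquely `k • x`
with `k ∈ Kˣ`, `x ∈ P(r)`. As `r` is even, `2 (q - 1) ∣ q ^ r - 1`, so every `k ∈ Kˣ` is a square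
in `F`; thus the decomposition restricts to squares and
`(q ^ r - 1) / 2 = (q - 1) · #(squares in P(r))`.
-/

open Module Finset IntermediateField

namespace Module.Basis

variable {ι K V : Type*} [LinearOrder ι] [Field K] [AddCommGroup V] [Module K V]

def IsNormalized (B : Basis ι K V) (v : V) : Prop :=
  ∃ j, B.repr v j = 1 ∧ ∀ i < j, B.repr v i = 0

variable {B : Basis ι K V}

theorem IsNormalized.ne_zero {v : V} (hv : B.IsNormalized v) : v ≠ 0 := by
  rintro rfl
  obtain ⟨j, hj, -⟩ := hv
  simp at hj

theorem exists_smul_isNormalized (B : Basis ι K V) {v : V} (hv : v ≠ 0) :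
    ∃ k : Kˣ, B.IsNormalized (k • v) := by
  have hs : (B.repr v).support.Nonempty := by simpa using hv
  have hj : B.repr v ((B.repr v).support.min' hs) ≠ 0 :=
    Finsupp.mem_support_iff.mp (min'_mem _ hs)
  refine ⟨(Units.mk0 _ hj)⁻¹, (B.repr v).support.min' hs, by simp [Units.smul_def, hj],
    fun i hi => ?_⟩
  by_contra h
  have hi_mem : i ∈ (B.repr v).support :=
    Finsupp.mem_support_iff.mpr fun h' => h (by simp [Units.smul_def, h'])
  exact (min'_le _ _ hi_mem).not_gt hi

theorem IsNormalized.eq_one_of_smul_eq {x y : V} (hx : B.IsNormalized x)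
    (hy : B.IsNormalized y) {k : K} (h : k • x = y) : k = 1 := by
  obtain ⟨j, hxj, hx⟩ := hx
  obtain ⟨j', hyj, hy⟩ := hy
  have hrepr (i : ι) : B.repr y i = k * B.repr x i := by simp [← h]
  rcases lt_trichotomy j j' with hlt | rfl | hgt
  · have hk : k = 0 := by simpa [hrepr, hxj] using hy j hlt
    simp [hrepr, hk] at hyj
  · simpa [hrepr, hxj] using hyj
  · simp [hrepr, hx j' hgt] at hyj

theorem card_eq_card_units_mul_card_isNormalized (B : Basis ι K V) {S : Set V} (h0 : 0 ∉ S)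
    (hS : ∀ k : Kˣ, ∀ v ∈ S, k • v ∈ S) :
    Nat.card S = Nat.card Kˣ * Nat.card {v : V // B.IsNormalized v ∧ v ∈ S} := by
  rw [← Nat.card_prod]
  let f : Kˣ × {v : V // B.IsNormalized v ∧ v ∈ S} → S := fun p => ⟨p.1 • p.2.1, hS _ _ p.2.2.2⟩
  refine (Nat.card_congr (Equiv.ofBijective f ⟨?_, ?_⟩)).symm
  · rintro ⟨k, ⟨x, hx, _⟩⟩ ⟨k', ⟨y, hy, _⟩⟩ h
    have hxy : ((k'⁻¹ * k : Kˣ) : K) • x = y := by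
      rw [Units.val_mul, mul_smul, ← Units.smul_def, ← Units.smul_def, inv_smul_eq_iff]
      exact congrArg Subtype.val h
    obtain rfl : k = k' :=
      (inv_mul_eq_one.mp (Units.val_eq_one.mp (hx.eq_one_of_smul_eq hy hxy))).symm
    simp_all [f]
  · rintro ⟨v, hv⟩
    obtain ⟨k, hk⟩ := B.exists_smul_isNormalized (ne_of_mem_of_not_mem hv h0)
    exact ⟨(k⁻¹, ⟨k • v, hk, hS k v hv⟩), by simp [f]⟩

theorem repr_add_sum_Ioi [LocallyFiniteOrderTop ι] (B : Basis ι K V) (j : ι) (c : ι → K)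
    (i : ι) :
    B.repr (B j + ∑ k ∈ Ioi j, c k • B k) i = if i = j then 1 else if j < i then c i else 0 := by
  simp only [map_add, map_sum, map_smul, repr_self, Finsupp.add_apply, Finsupp.coe_finsetSum,
    Finset.sum_apply, Finsupp.smul_apply, Finsupp.single_apply, smul_eq_mul, mul_ite, mul_one,
    mul_zero, Finset.sum_ite_eq', mem_Ioi]
  split_ifs <;> simp_all

theorem isNormalized_iff_exists_eq_add_sum_Ioi [LocallyFiniteOrderTop ι] {v : V} :
    B.IsNormalized v ↔ ∃ j, ∃ c : ι → K, v = B j + ∑ k ∈ Ioi j, c k • B k := by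
  constructor
  · rintro ⟨j, hj, hlt⟩
    refine ⟨j, B.repr v, B.repr.injective (Finsupp.ext fun i => ?_)⟩
    rw [repr_add_sum_Ioi]
    rcases lt_trichotomy i j with h | rfl | h
    · simp [h.ne, h.not_gt, hlt i h]
    · simp [hj]
    · simp [h.ne', h]
  · rintro ⟨j, c, rfl⟩
    refine ⟨j, by rw [repr_add_sum_Ioi]; simp, fun i hi => ?_⟩
    rw [repr_add_sum_Ioi]
    simp [hi.ne, hi.not_gt]

theorem exists_eq_add_sum_Ico_iff_isNormalized {r : ℕ} {B : Basis (Fin r) K V} {b : ℕ → V}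
    (hb : ∀ i : Fin r, B i = b i) (v : V) :
    (∃ j : Fin r, ∃ c : ℕ → K, v = b j + ∑ i ∈ Ico ((j : ℕ) + 1) r, c i • b i) ↔
      B.IsNormalized v := by
  have hsum (j : Fin r) (f : ℕ → V) : ∑ i ∈ Ico ((j : ℕ) + 1) r, f i = ∑ i ∈ Ioi j, f i := by
    rw [Ico_add_one_left_eq_Ioo, ← Fin.map_valEmbedding_Ioi, sum_map]
    rfl
  simp_rw [isNormalized_iff_exists_eq_add_sum_Ioi, hsum, hb]
  constructor
  · rintro ⟨j, c, rfl⟩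
    exact ⟨j, fun i => c i, rfl⟩
  · rintro ⟨j, c, rfl⟩
    exact ⟨j, fun n => if h : n < r then c ⟨n, h⟩ else 0, by simp⟩

end Module.Basis

theorem Nat.two_mul_sub_one_dvd_pow_sub_one {q r : ℕ} (hq : Odd q) (hr : Even r) :
    2 * (q - 1) ∣ q ^ r - 1 := by
  obtain ⟨k, rfl⟩ := hq
  refine Dvd.dvd.trans ⟨k + 1, ?_⟩ (Nat.pow_sub_one_dvd_pow_sub_one _ (even_iff_two_dvd.mp hr))
  rw [Nat.add_sub_cancel, show (2 * k + 1) ^ 2 = 2 * (2 * k) * (k + 1) + 1 by ring,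
    Nat.add_sub_cancel]

/-- `A = (q ^ r - 1) / (q ^ s - 1)` divides the gcd, and `A ≥ q ^ s + 1 > 2` unless `s = r`. -/
theorem Nat.eq_of_pow_sub_one_dvd_mul {q r s N : ℕ} (hq : 1 < q) (hs : 0 < s) (hsr : s ∣ r)
    (hgcd : Nat.gcd ((q ^ r - 1) / (q - 1)) N = 2) (h : q ^ r - 1 ∣ N * (q ^ s - 1)) :
    s = r := by
  obtain ⟨k, rfl⟩ := hsr
  have hm : 2 ≤ q ^ s := Nat.one_lt_pow hs.ne' hq
  obtain ⟨A, hA⟩ := Nat.pow_sub_one_dvd_pow_sub_one q (dvd_mul_right s k)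
  have hAN : A ∣ N := Nat.dvd_of_mul_dvd_mul_left (by omega : 0 < q ^ s - 1) <| by
    rw [← hA, mul_comm (q ^ s - 1)]
    exact h
  have hAt : A ∣ (q ^ (s * k) - 1) / (q - 1) := by
    obtain ⟨B, hB⟩ := Nat.sub_one_dvd_pow_sub_one q s
    rw [hA, hB, mul_assoc, Nat.mul_div_cancel_left _ (by omega)]
    exact dvd_mul_left _ _
  have hA2 : A ∣ 2 := hgcd ▸ Nat.dvd_gcd hAt hAN
  have hA0 : 0 < A := Nat.pos_of_dvd_of_pos hA2 two_pos
  have hA2' : A ≤ 2 := Nat.le_of_dvd two_pos hA2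
  rw [pow_mul] at hA
  generalize q ^ s = m at hA hm
  rcases k with _ | _ | k
  · simp at hA
    omega
  · simp
  · have : m ^ 2 ≤ m ^ (k + 1 + 1) := Nat.pow_le_pow_right (by omega) (by omega)
    have : (m - 1) * A ≤ (m - 1) * 2 := Nat.mul_le_mul_left _ hA2'
    have : m ^ 2 = (m - 1) * 2 + (m - 1) * (m - 1) + 1 := by
      zify [show 1 ≤ m by omega]
      ring
    have : 0 < (m - 1) * (m - 1) := Nat.mul_pos (by omega) (by omega)
    omega

theorem exists_basis_pow_of_natDegree_minpoly_eq {K F : Type*} [Field K] [Field F] [Algebra K F]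
    [FiniteDimensional K F] {r : ℕ} {θ : F} (hθ : (minpoly K θ).natDegree = r)
    (hr : finrank K F = r) : ∃ B : Basis (Fin r) K F, ∀ i, B i = θ ^ (i : ℕ) := by
  subst hθ
  exact ⟨basisOfLinearIndependentOfCardEqFinrank' _ (linearIndependent_pow θ) (by simp [hr]),
    by simp⟩

theorem exists_sq_eq_smul_of_isSquare {K F : Type*} [Field K] [Field F] [Algebra K F] {k : K}
    (hk : k ≠ 0) (hsq : IsSquare (algebraMap K F k)) {v : F} (hv : ∃ w, w ≠ 0 ∧ w ^ 2 = v) :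
    ∃ w, w ≠ 0 ∧ w ^ 2 = k • v := by
  obtain ⟨u, hu⟩ := hsq
  obtain ⟨w, hw, rfl⟩ := hv
  refine ⟨u * w, mul_ne_zero ?_ hw, by rw [Algebra.smul_def, hu]; ring⟩
  rintro rfl
  simp [hk] at hu

namespace FiniteField

section

variable {K F : Type*} [Field K] [Field F] [Finite F] [Algebra K F]

theorem pow_natCard_pow_finrank_adjoin_simple (θ : F) :
    θ ^ Nat.card K ^ finrank K K⟮θ⟯ = θ := by
  have : Fintype K⟮θ⟯ := Fintype.ofFinite _
  have : Finite K := Finite.of_injective _ (algebraMap K F).injective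
  have h := FiniteField.pow_card (⟨θ, mem_adjoin_simple_self K θ⟩ : K⟮θ⟯)
  rw [Fintype.card_eq_nat_card, Module.natCard_eq_pow_finrank (K := K)] at h
  exact congrArg Subtype.val h

theorem natDegree_minpoly_pow_eq_finrank {η : Fˣ} (hη : ∀ x : Fˣ, x ∈ Subgroup.zpowers η)
    {N : ℕ} (hgcd : Nat.gcd ((Nat.card F - 1) / (Nat.card K - 1)) N = 2) :
    (minpoly K ((η : F) ^ N)).natDegree = finrank K F := by
  have : Finite K := Finite.of_injective _ (algebraMap K F).injective
  set θ := (η : F) ^ N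
  set s := finrank K K⟮θ⟯
  have hsr : s ∣ finrank K F := ⟨finrank K⟮θ⟯ F, (finrank_mul_finrank K K⟮θ⟯ F).symm⟩
  have hθ : η ^ (N * (Nat.card K ^ s - 1)) = 1 := by
    have h := pow_natCard_pow_finrank_adjoin_simple (K := K) θ
    rw [← Nat.sub_add_cancel (pow_pos Finite.card_pos s), pow_succ, ← sub_eq_zero] at h
    ext
    simpa [θ, pow_mul, sub_eq_zero, mul_sub_one] using h
  have hord : Nat.card K ^ finrank K F - 1 ∣ N * (Nat.card K ^ s - 1) := by
    rw [← Module.natCard_eq_pow_finrank, ← Nat.card_units,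
      ← orderOf_eq_card_of_forall_mem_zpowers hη]
    exact orderOf_dvd_of_pow_eq_one hθ
  rw [← adjoin.finrank (IsIntegral.of_finite K θ)]
  exact Nat.eq_of_pow_sub_one_dvd_mul Finite.one_lt_card finrank_pos hsr
    (by rwa [← Module.natCard_eq_pow_finrank]) hord

end

variable {F : Type*} [Field F] [Fintype F]

theorem isSquare_algebraMap {K : Type*} [Field K] [Finite K] [Algebra K F] (hF : ringChar F ≠ 2)
    (h : Nat.card K - 1 ∣ Fintype.card F / 2) (k : K) : IsSquare (algebraMap K F k) := by
  have := Fintype.ofFinite K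
  rw [Nat.card_eq_fintype_card] at h
  rcases eq_or_ne k 0 with rfl | hk
  · simp
  rw [isSquare_iff hF (by simpa using hk)]
  obtain ⟨m, hm⟩ := h
  rw [← map_pow, hm, pow_mul, pow_card_sub_one_eq_one k hk, one_pow, map_one]

theorem card_nonzero_squares (hF : ringChar F ≠ 2) :
    Nat.card {v : F | ∃ w, w ≠ 0 ∧ w ^ 2 = v} = (Fintype.card F - 1) / 2 := by
  have hS : {v : F | ∃ w, w ≠ 0 ∧ w ^ 2 = v} =
      Units.val '' ((powMonoidHom 2 : Fˣ →* Fˣ).range : Set Fˣ) := by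
    ext v
    simp only [Set.mem_ofPred_eq, Set.mem_image, SetLike.mem_coe, MonoidHom.mem_range,
      powMonoidHom_apply]
    constructor
    · rintro ⟨w, hw, rfl⟩
      exact ⟨(Units.mk0 w hw) ^ 2, ⟨_, rfl⟩, by simp⟩
    · rintro ⟨_, ⟨w, rfl⟩, rfl⟩
      exact ⟨w, w.ne_zero, by simp⟩
  rw [hS, Nat.card_image_of_injective Units.val_injective, SetLike.coe_sort_coe,
    IsCyclic.card_powMonoidHom_range, Nat.card_units, Nat.card_eq_fintype_card]
  have := odd_card_of_char_ne_two hF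
  rw [Nat.gcd_comm, Nat.gcd_eq_left]
  omega

end FiniteField

theorem mu_r_eq_half_general (q r N : ℕ) (hq : IsPrimePow q) (hodd : Odd q)
    (hre : Even r) (hgcd : Nat.gcd ((q ^ r - 1) / (q - 1)) N = 2)
    (F : Type*) [Field F] [Fintype F] (hF : Fintype.card F = q ^ r)
    (K : Subfield F) (hK : Nat.card K = q)
    (η : Fˣ) (hη : ∀ x : Fˣ, x ∈ Subgroup.zpowers η) :
    Nat.card {x : F //
      (∃ j : Fin r, ∃ c : ℕ → K,
        x = (η : F) ^ (N * (j : ℕ)) +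
          ∑ i ∈ Finset.Ico ((j : ℕ) + 1) r, (c i : F) * (η : F) ^ (N * i)) ∧
      ∃ w : F, w ≠ 0 ∧ w ^ 2 = x} = (q ^ r - 1) / (2 * (q - 1)) := by
  have hq1 : 1 < q := hq.one_lt
  have hcardF : Nat.card F = q ^ r := by rw [Nat.card_eq_fintype_card, hF]
  have hrank : finrank K F = r := Nat.pow_right_injective hq1 <| by
    simpa only [hK, hcardF] using (Module.natCard_eq_pow_finrank (K := K) (V := F)).symm
  have hchar : ringChar F ≠ 2 := mt FiniteField.even_card_iff_char_two.mp
    (by rw [hF, Nat.odd_iff.mp hodd.pow]; exact one_ne_zero)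
  obtain ⟨B, hB⟩ := exists_basis_pow_of_natDegree_minpoly_eq
    ((FiniteField.natDegree_minpoly_pow_eq_finrank hη (by rwa [hcardF, hK])).trans hrank) hrank
  obtain ⟨m, hm⟩ := Nat.two_mul_sub_one_dvd_pow_sub_one hodd hre
  rw [mul_assoc] at hm
  have hsq := FiniteField.isSquare_algebraMap (K := K) hchar ⟨m, by rw [hK, hF]; omega⟩
  have hcount := B.card_eq_card_units_mul_card_isNormalized
    (S := {v : F | ∃ w, w ≠ 0 ∧ w ^ 2 = v}) (by simp)
    fun k _ => exists_sq_eq_smul_of_isSquare k.ne_zero (hsq k)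
  rw [FiniteField.card_nonzero_squares hchar, Nat.card_units, hK, hF, hm,
    Nat.mul_div_cancel_left _ two_pos] at hcount
  -- `(c i : F) * x` is `c i • x` by definition
  have hP (x : F) : (∃ j : Fin r, ∃ c : ℕ → K, x = (η : F) ^ (N * (j : ℕ)) +
      ∑ i ∈ Finset.Ico ((j : ℕ) + 1) r, (c i : F) * (η : F) ^ (N * i)) ↔ B.IsNormalized x :=
    Basis.exists_eq_add_sum_Ico_iff_isNormalized (b := fun i => (η : F) ^ (N * i))
      (fun i => by rw [hB, ← pow_mul]) x
  rw [Nat.card_congr (Equiv.subtypeEquivRight fun x => and_congr_left' (hP x)), hm, ← mul_assoc,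
    Nat.mul_div_cancel_left _ (by omega)]
  exact (Nat.eq_of_mul_eq_mul_left (by omega) hcount).symm

/-- Lemma 2.5: for `b = r`, the number of squares among the coset representatives
`P(r) = ⋃_{j=0}^{r-1} {η^{jN} + ∑_{i>j} x_i η^{iN} : x_i ∈ F_q}` equals
`(q^r-1)/(2(q-1))`, i.e. exactly half of `|P(r)| = (q^r-1)/(q-1)`. -/
theorem mu_r_eq_half (q r N : ℕ) (hq : IsPrimePow q) (hodd : Odd q)
    (hr : 2 ≤ r) (hre : Even r) (hN : 0 < N) (hNdvd : N ∣ q ^ r - 1)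
    (hgcd : Nat.gcd ((q ^ r - 1) / (q - 1)) N = 2)
    (F : Type*) [Field F] [Fintype F] (hF : Fintype.card F = q ^ r)
    (K : Subfield F) (hK : Nat.card K = q)
    (η : Fˣ) (hη : ∀ x : Fˣ, x ∈ Subgroup.zpowers η) :
    Nat.card {x : F //
      (∃ j : Fin r, ∃ c : ℕ → K,
        x = (η : F) ^ (N * (j : ℕ)) +
          ∑ i ∈ Finset.Ico ((j : ℕ) + 1) r, (c i : F) * (η : F) ^ (N * i)) ∧
      ∃ w : F, w ≠ 0 ∧ w ^ 2 = x} = (q ^ r - 1) / (2 * (q - 1)) :=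
  mu_r_eq_half_general q r N hq hodd hre hgcd F hF K hK η hη
end

section
/- Let F_{q^r} be a finite field of odd characteristic p with q = p^e, let χ(x) = exp(2πi/p · Tr_{F_{q^r}/F_p}(x)), and suppose p ≡ 1 mod 4. Then the sum of χ(y) over all nonzero squares y ∈ F_{q^r}^* equals (-q^{r/2} - 1)/2, and the sum over non-squares equals (q^{r/2} - 1)/2. -/
/-!
Let `q = p^(e r / 2)` and let `K ⊆ F` be the subfield with `q` elements, so that `F/K` is
quadratic with conjugation `x ↦ x^q`. As `q ≡ 1 mod 4`, there is `i ∈ K` with `i² = -1`, and the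
bijection `x ↦ x + i x^q` of `F` satisfies `Tr_{F/K}((x + i x^q)²) = 4 i N_{F/K}(x)`. Hence the
Gauss sum `∑ₓ χ(x²)` equals `∑ₓ ψ(4 i N(x))` for the trace character `ψ` of `K`; since the norm
maps `Fˣ` onto `Kˣ` with fibres of size `q + 1`, this is `1 - (q + 1) = -q`. Both sums then follow
from `∑ₓ χ(x²) = 1 + 2 ∑_{squares} χ` and `∑_{Fˣ} χ = -1`.
-/

open Finset

theorem Fintype.sum_eq_add_sum_units {M₀ M : Type*} [GroupWithZero M₀] [Fintype M₀]
    [DecidableEq M₀] [AddCommMonoid M] (f : M₀ → M) : ∑ x, f x = f 0 + ∑ u : M₀ˣ, f u := by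
  rw [Fintype.sum_eq_add_sum_subtype_ne f 0]
  congr 1
  exact (Fintype.sum_equiv unitsEquivNeZero _ _ fun _ => rfl).symm

theorem isSquare_units_iff {M₀ : Type*} [GroupWithZero M₀] {u : M₀ˣ} :
    IsSquare u ↔ IsSquare (u : M₀) := by
  refine ⟨fun ⟨v, hv⟩ => ⟨v, by simp [hv]⟩, fun ⟨a, ha⟩ => ?_⟩
  have ha0 : a ≠ 0 := by rintro rfl; simp at ha
  exact ⟨Units.mk0 a ha0, Units.ext (by simpa using ha)⟩

theorem MonoidHom.sum_comp_of_surjective {G H M : Type*} [Group G] [Fintype G] [Group H]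
    [Fintype H] [AddCommMonoid M] {f : G →* H} (hf : Function.Surjective f) (φ : H → M) :
    ∑ g, φ (f g) = (Fintype.card G / Fintype.card H) • ∑ h, φ h := by
  classical
  have hfiber (h : H) : #{g | f g = h} = #{g | f g = 1} :=
    MonoidHom.card_fiber_eq_of_mem_range f (hf h) (hf 1)
  have hcard : Fintype.card G = Fintype.card H * #{g | f g = 1} := by
    rw [← card_univ, card_eq_sum_card_fiberwise fun g _ => mem_univ (f g)]
    simp [hfiber]
  rw [hcard, Nat.mul_div_cancel_left _ Fintype.card_pos, sum_comp,
    image_univ_of_surjective hf, smul_sum]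
  simp only [hfiber]

theorem AddChar.sum_units_eq_neg_one {F R : Type*} [Field F] [Fintype F] [DecidableEq F]
    [CommRing R] [IsDomain R] {ψ : AddChar F R} (hψ : ψ ≠ 1) : ∑ u : Fˣ, ψ u = -1 := by
  have h := ψ.sum_eq_zero_of_ne_one hψ
  rw [Fintype.sum_eq_add_sum_units, AddChar.map_zero_eq_one] at h
  linear_combination h

namespace FiniteField

section Squares

variable {F : Type*} [Field F] [Fintype F] [DecidableEq F]

theorem card_sqrts_eq_of_ne_zero (hF : ringChar F ≠ 2) {a : F} (ha : a ≠ 0) :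
    #{x | x ^ 2 = a} = if IsSquare a then 2 else 0 := by
  have h := quadraticChar_card_sqrts hF a
  rw [Set.toFinset_ofPred] at h
  split_ifs with hsq
  · rw [(quadraticChar_one_iff_isSquare ha).mpr hsq] at h
    exact_mod_cast h
  · rw [quadraticChar_neg_one_iff_not_isSquare.mpr hsq] at h
    omega

theorem sum_comp_sq {R : Type*} [CommRing R] (hF : ringChar F ≠ 2) (f : F → R) :
    ∑ x, f (x ^ 2) = f 0 + 2 * ∑ u : Fˣ, if IsSquare u then f u else 0 := by
  calc ∑ x, f (x ^ 2) = ∑ a, #{x | x ^ 2 = a} • f a := by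
        rw [← sum_fiberwise univ (· ^ 2)]
        refine sum_congr rfl fun a _ => ?_
        rw [sum_congr rfl fun x hx => congrArg f (mem_filter.mp hx).2, sum_const]
    _ = f 0 + 2 * ∑ u : Fˣ, if IsSquare u then f u else 0 := by
        rw [Fintype.sum_eq_add_sum_units, mul_sum]
        simp only [sq_eq_zero_iff, filter_eq', mem_univ, if_true, card_singleton, one_smul,
          card_sqrts_eq_of_ne_zero hF (Units.ne_zero _), isSquare_units_iff]
        congr 1
        refine sum_congr rfl fun u _ => ?_
        split_ifs <;> simp [two_mul]

theorem two_mul_sum_isSquare_addChar {R : Type*} [CommRing R] [IsDomain R]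
    (hF : ringChar F ≠ 2) {ψ : AddChar F R} (hψ : ψ ≠ 1) :
    2 * ∑ u : Fˣ, (if IsSquare u then ψ u else 0) = ∑ x, ψ (x ^ 2) - 1 ∧
      2 * ∑ u : Fˣ, (if ¬IsSquare u then ψ u else 0) = -∑ x, ψ (x ^ 2) - 1 := by
  have hsq := sum_comp_sq hF ψ
  have hsplit : ∑ u : Fˣ, (if IsSquare u then ψ u else 0) +
      ∑ u : Fˣ, (if ¬IsSquare u then ψ u else 0) = -1 := by
    rw [← sum_add_distrib, ← ψ.sum_units_eq_neg_one hψ]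
    exact sum_congr rfl fun u _ => by split_ifs <;> simp
  rw [AddChar.map_zero_eq_one] at hsq
  exact ⟨by linear_combination -hsq, by linear_combination 2 * hsplit + hsq⟩

end Squares

section QuadraticExtension

variable {K L : Type*} [Field K] [Fintype K] [Field L] [Fintype L] [Algebra K L]

theorem sum_comp_norm [DecidableEq K] [DecidableEq L] {M : Type*} [AddCommMonoid M]
    (f : K → M) :
    ∑ x : L, f (Algebra.norm K x) =
      f 0 + ((Fintype.card L - 1) / (Fintype.card K - 1)) • ∑ u : Kˣ, f u := by
  rw [Fintype.sum_eq_add_sum_units, Algebra.norm_zero, ← Fintype.card_units,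
    ← Fintype.card_units, ← MonoidHom.sum_comp_of_surjective (unitsMap_norm_surjective K L)]
  rfl

theorem algebraMap_trace_eq_add_pow_card (hL : Module.finrank K L = 2) (x : L) :
    algebraMap K L (Algebra.trace K L x) = x + x ^ Fintype.card K := by
  simp [algebraMap_trace_eq_sum_pow, hL, sum_range_succ]

theorem algebraMap_norm_eq_mul_pow_card (hL : Module.finrank K L = 2) (x : L) :
    algebraMap K L (Algebra.norm K x) = x * x ^ Fintype.card K := by
  simp [algebraMap_norm_eq_prod_pow, hL, prod_range_succ]

theorem pow_card_pow_card (hL : Module.finrank K L = 2) (x : L) :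
    (x ^ Fintype.card K) ^ Fintype.card K = x := by
  rw [← pow_mul, ← sq, ← hL, ← Module.card_eq_pow_finrank, pow_card]

theorem add_mul_pow_card_pow_card (hL : Module.finrank K L = 2) (i : K) (x : L) :
    (x + algebraMap K L i * x ^ Fintype.card K) ^ Fintype.card K =
      x ^ Fintype.card K + algebraMap K L i * x := by
  have := map_add (frobeniusAlgHom K L) x (algebraMap K L i * x ^ Fintype.card K)
  simp only [map_mul, AlgHom.commutes, coe_frobeniusAlgHom] at this
  rwa [pow_card_pow_card hL] at this

theorem trace_sq_add_mul_pow_card (hL : Module.finrank K L = 2) {i : K} (hi : i ^ 2 = -1)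
    (x : L) :
    Algebra.trace K L ((x + algebraMap K L i * x ^ Fintype.card K) ^ 2) =
      4 * i * Algebra.norm K x := by
  apply (algebraMap K L).injective
  have hι : algebraMap K L i ^ 2 = -1 := by rw [← map_pow, hi, map_neg, map_one]
  rw [algebraMap_trace_eq_add_pow_card hL, ← pow_mul, mul_comm 2, pow_mul,
    add_mul_pow_card_pow_card hL, map_mul, algebraMap_norm_eq_mul_pow_card hL, map_mul,
    map_ofNat]
  linear_combination (x ^ 2 + (x ^ Fintype.card K) ^ 2) * hι

theorem bijective_add_mul_pow_card (hL : Module.finrank K L = 2) (hK : ringChar K ≠ 2) {i : K}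
    (hi : i ^ 2 = -1) :
    Function.Bijective fun x : L => x + algebraMap K L i * x ^ Fintype.card K := by
  have h2 : (2 : L) ≠ 0 := by
    rw [← map_ofNat (algebraMap K L)]
    exact (map_ne_zero _).mpr (Ring.two_ne_zero hK)
  have hι : algebraMap K L i ^ 2 = -1 := by rw [← map_pow, hi, map_neg, map_one]
  have hinv (x : L) : (x + algebraMap K L i * x ^ Fintype.card K) -
      algebraMap K L i * (x + algebraMap K L i * x ^ Fintype.card K) ^ Fintype.card K =
        2 * x := by
    rw [add_mul_pow_card_pow_card hL]
    linear_combination (-x) * hι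
  refine Finite.injective_iff_bijective.mp fun x y hxy => ?_
  have := hinv x
  rw [hxy, hinv y] at this
  exact (mul_left_cancel₀ h2 this).symm

theorem sum_addChar_trace_sq {R : Type*} [CommRing R] [IsDomain R]
    (hL : Module.finrank K L = 2) (hK : ringChar K ≠ 2) (hK1 : IsSquare (-1 : K))
    {ψ : AddChar K R} (hψ : ψ ≠ 1) :
    ∑ x : L, ψ (Algebra.trace K L (x ^ 2)) = -Fintype.card K := by
  classical
  obtain ⟨i, hi⟩ := hK1
  replace hi : i ^ 2 = -1 := by rw [hi, sq]
  have h4i : 4 * i ≠ 0 := by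
    have h2 := Ring.two_ne_zero hK
    rw [show (4 : K) = 2 * 2 by norm_num]
    exact mul_ne_zero (mul_ne_zero h2 h2) (by rintro rfl; simp at hi)
  have hq : (Fintype.card L - 1) / (Fintype.card K - 1) = Fintype.card K + 1 := by
    rw [Module.card_eq_pow_finrank (K := K), hL, ← one_pow 2, Nat.sq_sub_sq, one_pow,
      Nat.mul_div_cancel _ (Nat.sub_pos_of_lt Fintype.one_lt_card)]
  calc ∑ x : L, ψ (Algebra.trace K L (x ^ 2))
      = ∑ x : L, ψ (Algebra.trace K L ((x + algebraMap K L i * x ^ Fintype.card K) ^ 2)) :=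
        (Fintype.sum_bijective _ (bijective_add_mul_pow_card hL hK hi) _ _ fun _ => rfl).symm
    _ = ∑ x : L, ψ.mulShift (4 * i) (Algebra.norm K x) := by
        simp only [trace_sq_add_mul_pow_card hL hi, AddChar.mulShift_apply]
    _ = -Fintype.card K := by
        rw [sum_comp_norm, AddChar.map_zero_eq_one, hq,
          AddChar.sum_units_eq_neg_one (AddChar.IsPrimitive.of_ne_one hψ h4i)]
        ring

end QuadraticExtension

section TraceCharacter

variable (p : ℕ)

noncomputable def traceAddChar [NeZero p] (F : Type*) [Field F] [Algebra (ZMod p) F] :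
    AddChar F ℂ :=
  ZMod.stdAddChar.compAddMonoidHom (Algebra.trace (ZMod p) F).toAddMonoidHom

theorem traceAddChar_apply [NeZero p] (F : Type*) [Field F] [Algebra (ZMod p) F] (x : F) :
    traceAddChar p F x =
      Complex.exp (2 * Real.pi * Complex.I * ((Algebra.trace (ZMod p) F x).val : ℂ) / p) := by
  rw [traceAddChar, AddChar.compAddMonoidHom_apply, ZMod.stdAddChar_apply, ZMod.toCircle_apply]
  rfl

theorem traceAddChar_ne_one [Fact p.Prime] (F : Type*) [Field F] [Finite F] [Algebra (ZMod p) F] :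
    traceAddChar p F ≠ 1 := by
  obtain ⟨x, hx⟩ := Algebra.trace_surjective (ZMod p) F 1
  refine AddChar.ne_one_iff.mpr ⟨x, fun h => one_ne_zero (α := ZMod p) ?_⟩
  rw [← hx]
  apply ZMod.injective_stdAddChar
  rw [AddChar.map_zero_eq_one]
  exact h

theorem traceAddChar_trace [Fact p.Prime] (K L : Type*) [Field K] [Field L] [Finite L]
    [Algebra (ZMod p) K] [Algebra (ZMod p) L] [Algebra K L] [IsScalarTower (ZMod p) K L] (x : L) :
    traceAddChar p K (Algebra.trace K L x) = traceAddChar p L x := by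
  have : Finite K := Finite.of_injective _ (algebraMap K L).injective
  simp only [traceAddChar, AddChar.compAddMonoidHom_apply]
  rw [LinearMap.toAddMonoidHom_coe, LinearMap.toAddMonoidHom_coe, Algebra.trace_trace]

end TraceCharacter

theorem exists_intermediateField_finrank_eq {p n d : ℕ} [Fact p.Prime] {F : Type*} [Field F]
    [Finite F] [Algebra (ZMod p) F] (hn : n ≠ 0) (hF : Module.finrank (ZMod p) F = n * d) :
    ∃ K : IntermediateField (ZMod p) F,
      Module.finrank (ZMod p) K = n ∧ Module.finrank K F = d := by
  have hdvd : Module.finrank (ZMod p) (GaloisField p n) ∣ Module.finrank (ZMod p) F := by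
    rw [GaloisField.finrank p hn, hF]
    exact dvd_mul_right n d
  obtain ⟨f⟩ := nonempty_algHom_of_finrank_dvd hdvd
  have hK : Module.finrank (ZMod p) f.fieldRange = n :=
    (AlgEquiv.ofInjectiveField f).toLinearEquiv.finrank_eq.symm.trans (GaloisField.finrank p hn)
  have htower := Module.finrank_mul_finrank (ZMod p) f.fieldRange F
  rw [hK, hF] at htower
  exact ⟨f.fieldRange, hK, Nat.eq_of_mul_eq_mul_left (Nat.pos_of_ne_zero hn) htower⟩

end FiniteField

open Complex in
open Classical in
theorem char_sum_squares_p1mod4_general (p e r : ℕ) (hp : p.Prime)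
    (hre : Even r) (hp4 : p % 4 = 1)
    (F : Type*) [Field F] [Fintype F] [Algebra (ZMod p) F]
    (hF : Fintype.card F = p ^ (e * r)) :
    (∑ y : Fˣ, if IsSquare y then
        Complex.exp (2 * Real.pi * Complex.I *
          ((Algebra.trace (ZMod p) F ((y : F))).val : ℂ) / p) else 0) =
      (-((p : ℂ) ^ e) ^ (r / 2) - 1) / 2 ∧
    (∑ y : Fˣ, if ¬ IsSquare y then
        Complex.exp (2 * Real.pi * Complex.I *
          ((Algebra.trace (ZMod p) F ((y : F))).val : ℂ) / p) else 0) =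
      (((p : ℂ) ^ e) ^ (r / 2) - 1) / 2 := by
  have := Fact.mk hp
  have := (Algebra.charP_iff (ZMod p) F p).mp (ZMod.charP p)
  obtain ⟨k, rfl⟩ := hre
  rw [show (k + k) / 2 = k by omega, ← pow_mul]
  have hFm : Module.finrank (ZMod p) F = e * k * 2 := by
    apply Nat.pow_right_injective hp.two_le
    simp only [FiniteField.pow_finrank_eq_card, hF, mul_two, mul_add]
  have hm : e * k ≠ 0 := fun h => Module.finrank_pos.ne' (by rw [hFm, h, zero_mul])
  obtain ⟨K, hK, hKF⟩ := FiniteField.exists_intermediateField_finrank_eq hm hFm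
  have := Fintype.ofFinite K
  have := (Algebra.charP_iff (ZMod p) K p).mp (ZMod.charP p)
  have hcardK : Fintype.card K = p ^ (e * k) := by
    rw [← FiniteField.pow_finrank_eq_card p K, hK]
  have hK1 : IsSquare (-1 : K) := by
    rw [FiniteField.isSquare_neg_one_iff, hcardK, Nat.pow_mod, hp4, one_pow]
    norm_num
  have hG : ∑ x : F, FiniteField.traceAddChar p F (x ^ 2) = -(p ^ (e * k) : ℂ) := by
    simpa [FiniteField.traceAddChar_trace, hcardK] using FiniteField.sum_addChar_trace_sq hKF
      (by rw [ringChar.eq K p]; omega) hK1 (FiniteField.traceAddChar_ne_one p K)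
  obtain ⟨hsq, hnsq⟩ := FiniteField.two_mul_sum_isSquare_addChar (by rw [ringChar.eq F p]; omega)
    (FiniteField.traceAddChar_ne_one p F)
  rw [hG] at hsq hnsq
  simp only [FiniteField.traceAddChar_apply] at hsq hnsq
  exact ⟨by linear_combination hsq / 2, by linear_combination hnsq / 2⟩

open Complex in
open Classical in
/-- Eq. (4.5)/(4.6) for `p ≡ 1 (mod 4)`: with `χ(x) = exp(2πi Tr(x)/p)` the
absolute-trace character of `F_{q^r}` (`q = p^e`, `r` even), the sum of `χ` over the
nonzero squares is `(-q^{r/2} - 1)/2` and over the non-squares is `(q^{r/2} - 1)/2`. -/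
theorem char_sum_squares_p1mod4 (p e r : ℕ) (hp : p.Prime) (hpodd : Odd p)
    (he : 0 < e) (hre : Even r) (hr : 0 < r) (hp4 : p % 4 = 1)
    (F : Type*) [Field F] [Fintype F] [Algebra (ZMod p) F]
    (hF : Fintype.card F = p ^ (e * r)) :
    (∑ y : Fˣ, if IsSquare y then
        Complex.exp (2 * Real.pi * Complex.I *
          ((Algebra.trace (ZMod p) F ((y : F))).val : ℂ) / p) else 0) =
      (-((p : ℂ) ^ e) ^ (r / 2) - 1) / 2 ∧
    (∑ y : Fˣ, if ¬ IsSquare y then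
        Complex.exp (2 * Real.pi * Complex.I *
          ((Algebra.trace (ZMod p) F ((y : F))).val : ℂ) / p) else 0) =
      (((p : ℂ) ^ e) ^ (r / 2) - 1) / 2 :=
  char_sum_squares_p1mod4_general p e r hp hre hp4 F hF
end

section
/- Let C be an irreducible cyclic code of length n over F_q given by c(a) = (Tr(a η^{jN}))_{j=0}^{n-1} with nN = q^r - 1 and η primitive. For 2 ≤ b, with θ_1, ..., θ_{(q^b-1)/(q-1)} a set of representatives of the F_q^*-lines in the span V = <1, η^N, ..., η^{(b-1)N}> (i.e., V \ {0} = ⊔_i θ_i F_q^*), the b-symbol weight of c(a) satisfies w_b(c(a)) = (1/q^{b-1}) Σ_{i=1}^{(q^b-1)/(q-1)} w_1(c(θ_i a)), provided {1, η^N, ..., η^{(b-1)N}} is F_q-linearly independent. -/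
/-- The `b`-symbol map `π_b`; indices are cyclic (mod `n`). -/
def pib {F : Type*} [Field F] {n : ℕ} (b : ℕ) (x : ZMod n → F) :
    ZMod n → (Fin b → F) :=
  fun i j => x (i + ((j : ℕ) : ZMod n))

/-- The `b`-symbol Hamming weight `w_b(x)`. -/
noncomputable def wb {F : Type*} [Field F] {n : ℕ} (b : ℕ) (x : ZMod n → F) : ℕ :=
  Nat.card {i : ZMod n // pib b x i ≠ 0}

/-!
Write `ζ = η^N` and `V = ⟨1, ζ, …, ζ^(b-1)⟩`. The window of `c(a)` at position `j` is nonzero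
iff the `F_q`-linear functional `v ↦ Tr(a ζ^j v)` does not vanish on `V`, while the `j`-th
entry of `c(θ_i a)` is this functional evaluated at `θ_i`. A nonzero functional on the
`b`-dimensional space `V` is nonzero at `(q-1) q^(b-1)` vectors, i.e. at exactly `q^(b-1)` of
the lines `θ_i F_q^*`. Counting the pairs `(i, j)` with `Tr(θ_i a ζ^j) ≠ 0` in both orders
gives `∑_i w_1(c(θ_i a)) = q^(b-1) w_b(c(a))`.
-/

open Finset Module

theorem Module.Dual.natCard_apply_ne_zero {K W : Type*} [Field K] [Finite K] [AddCommGroup W]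
    [Module K W] [Module.Finite K W] {f : Module.Dual K W} (hf : f ≠ 0) :
    Nat.card {w // f w ≠ 0} = (Nat.card K - 1) * Nat.card K ^ (finrank K W - 1) := by
  have hker := finrank_ker_add_one_of_ne_zero hf
  have := Module.finite_of_finite K (M := W)
  have := Fintype.ofFinite W
  classical
  calc Nat.card {w // f w ≠ 0} = Nat.card W - Nat.card (LinearMap.ker f) := by
        simp only [Nat.card_eq_fintype_card, Fintype.card_subtype_compl]; rfl
    _ = _ := by
        rw [natCard_eq_pow_finrank (K := K), natCard_eq_pow_finrank (K := K) (V := LinearMap.ker f),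
          ← hker]
        simp [pow_succ, Nat.sub_one_mul, mul_comm]

section LineRepresentatives

variable {K M ι : Type*} [Field K] [AddCommGroup M] [Module K M] {V : Submodule K M}
  {θ : ι → M}

theorem exists_equiv_prod_units_of_exists_smul [Finite K] [Finite ι] [Finite V]
    (hθ : ∀ v ∈ V, v ≠ 0 → ∃ i, ∃ y : Kˣ, v = (y : K) • θ i)
    (hcard : Nat.card ι * (Nat.card K - 1) = Nat.card V - 1) :
    ∃ e : {v : V // v ≠ 0} ≃ ι × Kˣ,
      ∀ v : {v : V // v ≠ 0}, ((v : V) : M) = ((e v).2 : K) • θ (e v).1 := by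
  have hex (v : {v : V // v ≠ 0}) : ∃ p : ι × Kˣ, (v : M) = (p.2 : K) • θ p.1 := by
    obtain ⟨i, y, hy⟩ := hθ v v.1.2 (by simpa using v.2)
    exact ⟨(i, y), hy⟩
  choose e he using hex
  have he_inj : Function.Injective e := fun v w hvw ↦
    Subtype.ext (Subtype.ext ((he v).trans (hvw ▸ (he w).symm)))
  have hcard_le : Nat.card (ι × Kˣ) ≤ Nat.card {v : V // v ≠ 0} := by
    have := Fintype.ofFinite V
    have := Fintype.ofFinite K
    classical
    simp only [Nat.card_prod, Nat.card_eq_fintype_card, Fintype.card_units] at hcard ⊢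
    rw [hcard, Fintype.card_subtype_compl, Fintype.card_subtype_eq]
  exact ⟨Equiv.ofBijective e (he_inj.bijective_of_nat_card_le hcard_le), he⟩

variable {e : {v : V // v ≠ 0} ≃ ι × Kˣ}

theorem natCard_apply_ne_zero_mul_of_equiv
    (he : ∀ v : {v : V // v ≠ 0}, ((v : V) : M) = ((e v).2 : K) • θ (e v).1)
    (f : M →ₗ[K] K) :
    Nat.card {i // f (θ i) ≠ 0} * (Nat.card K - 1) = Nat.card {v : V // f v ≠ 0} := by
  have hf (v : {v : V // v ≠ 0}) : f v ≠ 0 ↔ f (θ (e v).1) ≠ 0 := by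
    rw [he v, map_smul, smul_ne_zero_iff_right (e v).2.ne_zero]
  calc Nat.card {i // f (θ i) ≠ 0} * (Nat.card K - 1)
      = Nat.card ({i // f (θ i) ≠ 0} × Kˣ) := by rw [Nat.card_prod, Nat.card_units]
    _ = Nat.card {v : {v : V // v ≠ 0} // f v ≠ 0} :=
        Nat.card_congr ((e.subtypeEquiv hf).trans Equiv.prodSubtypeFstEquivSubtypeProd).symm
    _ = Nat.card {v : V // f v ≠ 0} :=
        Nat.card_congr <| Equiv.subtypeSubtypeEquivSubtype (p := (· ≠ 0))
          (q := fun v : V ↦ f v ≠ 0) fun hv h0 ↦ hv (by simp [h0])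

theorem card_filter_apply_ne_zero_of_le_ker [Fintype ι] [DecidableEq K]
    (he : ∀ v : {v : V // v ≠ 0}, ((v : V) : M) = ((e v).2 : K) • θ (e v).1)
    {f : M →ₗ[K] K} (hV : V ≤ LinearMap.ker f) : #{i | f (θ i) ≠ 0} = 0 := by
  refine card_eq_zero.mpr (filter_eq_empty_iff.mpr fun i _ ↦ not_not.mpr (hV ?_))
  have h := he (e.symm (i, 1))
  simp only [Equiv.apply_symm_apply, Units.val_one, one_smul] at h
  exact h ▸ ((e.symm (i, 1)) : V).2

theorem card_filter_apply_ne_zero_of_not_le_ker [Finite K] [Fintype ι] [DecidableEq K]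
    [Module.Finite K V]
    (he : ∀ v : {v : V // v ≠ 0}, ((v : V) : M) = ((e v).2 : K) • θ (e v).1)
    {f : M →ₗ[K] K} (hV : ¬ V ≤ LinearMap.ker f) :
    #{i | f (θ i) ≠ 0} = Nat.card K ^ (finrank K V - 1) := by
  have hf : f.domRestrict V ≠ 0 := fun h ↦ hV fun v hv ↦ LinearMap.congr_fun h ⟨v, hv⟩
  have hq : 0 < Nat.card K - 1 := Nat.sub_pos_of_lt Finite.one_lt_card
  have hcount := natCard_apply_ne_zero_mul_of_equiv he f
  rw [show Nat.card {v : V // f v ≠ 0} = _ from Module.Dual.natCard_apply_ne_zero hf,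
    mul_comm] at hcount
  rw [← Fintype.card_subtype, ← Nat.card_eq_fintype_card]
  exact Nat.eq_of_mul_eq_mul_left hq hcount

end LineRepresentatives

section SymbolWeight

variable {K : Type*} [Field K] {n : ℕ} [NeZero n] [DecidableEq K]

theorem wb_eq_card_filter (b : ℕ) (x : ZMod n → K) :
    wb b x = #{i | ∃ k : Fin b, x (i + k) ≠ 0} := by
  rw [wb, Nat.card_eq_fintype_card, ← Fintype.card_subtype]
  exact Fintype.card_congr (Equiv.subtypeEquivRight fun _ ↦ Function.ne_iff)

theorem wb_one (x : ZMod n → K) : wb 1 x = #{i | x i ≠ 0} := by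
  simp [wb_eq_card_filter]

end SymbolWeight

theorem pow_val_add_natCast {M : Type*} [Monoid M] {n : ℕ} [NeZero n] {ζ : M} (hζ : ζ ^ n = 1)
    (i : ZMod n) (k : ℕ) : ζ ^ (i + k).val = ζ ^ i.val * ζ ^ k := by
  rw [ZMod.val_add, ZMod.val_natCast, Nat.add_mod_mod, ← pow_eq_pow_mod _ hζ, pow_add]

theorem sum_wb_one_eq_pow_mul_wb {K F ι : Type*} [Field K] [Finite K] [CommRing F]
    [Algebra K F] [Fintype ι] {n b : ℕ} [NeZero n] (T : F →ₗ[K] K) {ζ : F} (hζ : ζ ^ n = 1)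
    (hind : LinearIndependent K fun k : Fin b ↦ ζ ^ (k : ℕ)) {θ : ι → F}
    (hθ : ∀ v ∈ Submodule.span K (Set.range fun k : Fin b ↦ ζ ^ (k : ℕ)), v ≠ 0 →
      ∃ i, ∃ y : Kˣ, v = (y : K) • θ i)
    (hcard : Nat.card ι * (Nat.card K - 1) = Nat.card K ^ b - 1) (a : F) :
    ∑ i, wb 1 (fun j : ZMod n ↦ T (θ i * a * ζ ^ j.val)) =
      Nat.card K ^ (b - 1) * wb b (fun j : ZMod n ↦ T (a * ζ ^ j.val)) := by
  classical
  set V := Submodule.span K (Set.range fun k : Fin b ↦ ζ ^ (k : ℕ))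
  have : Module.Finite K V := FiniteDimensional.span_of_finite K (Set.finite_range _)
  have := Module.finite_of_finite K (M := V)
  have hrank : finrank K V = b := by rw [finrank_span_eq_card hind, Fintype.card_fin]
  obtain ⟨e, he⟩ := exists_equiv_prod_units_of_exists_smul hθ
    (by rwa [natCard_eq_pow_finrank (K := K) (V := V), hrank])
  have hker (x : F) : V ≤ LinearMap.ker (T ∘ₗ LinearMap.mulRight K x) ↔
      ∀ k : Fin b, T (x * ζ ^ (k : ℕ)) = 0 := by
    simp [V, Submodule.span_le, Set.range_subset_iff, mul_comm]
  have hcount (x : F) : #{i | T (θ i * x) ≠ 0} =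
      if ∃ k : Fin b, T (x * ζ ^ (k : ℕ)) ≠ 0 then Nat.card K ^ (b - 1) else 0 := by
    split_ifs with h
    · rw [← hrank]
      exact card_filter_apply_ne_zero_of_not_le_ker he (f := T ∘ₗ LinearMap.mulRight K x)
        (by simpa [hker] using h)
    · exact card_filter_apply_ne_zero_of_le_ker he ((hker x).2 (by simpa using h))
  calc ∑ i, wb 1 (fun j : ZMod n ↦ T (θ i * a * ζ ^ j.val))
      = ∑ i, #{j : ZMod n | T (θ i * (a * ζ ^ j.val)) ≠ 0} := by
        simp only [wb_one, mul_assoc]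
    _ = ∑ j : ZMod n, #{i | T (θ i * (a * ζ ^ j.val)) ≠ 0} :=
        sum_card_bipartiteAbove_eq_sum_card_bipartiteBelow _
    _ = ∑ j : ZMod n, if ∃ k : Fin b, T (a * ζ ^ j.val * ζ ^ (k : ℕ)) ≠ 0
          then Nat.card K ^ (b - 1) else 0 := by simp only [hcount]
    _ = _ := by
        simp only [wb_eq_card_filter, pow_val_add_natCast hζ, mul_assoc, card_filter, mul_sum,
          mul_ite, mul_one, mul_zero]

theorem wb_eq_sum_w1_general (q r N n b : ℕ) [NeZero n]
    (hnN : n * N = q ^ r - 1)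
    (F : Type*) [Field F] [Fintype F] (hF : Fintype.card F = q ^ r)
    (K : Subfield F) (hK : Nat.card K = q)
    (η : Fˣ)
    (hind : LinearIndependent ↥K (fun j : Fin b => (η : F) ^ (N * (j : ℕ))))
    (θ : Fin ((q ^ b - 1) / (q - 1)) → F)
    (hθ : ∀ v : F,
      v ∈ Submodule.span ↥K {x : F | ∃ j : Fin b, x = (η : F) ^ (N * (j : ℕ))} →
      v ≠ 0 → ∃! i, ∃ y : Kˣ, v = θ i * ((y : K) : F))
    (a : F) :
    (wb b (fun j : ZMod n => Algebra.trace ↥K F (a * (η : F) ^ (N * j.val))) : ℚ) =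
      (1 / (q : ℚ) ^ (b - 1)) *
        ∑ i, (wb 1 (fun j : ZMod n =>
          Algebra.trace ↥K F (θ i * a * (η : F) ^ (N * j.val))) : ℚ) := by
  simp only [pow_mul] at hind hθ ⊢
  have hζ : ((η : F) ^ N) ^ n = 1 := by
    rw [← pow_mul, mul_comm, hnN, ← hF]
    exact FiniteField.pow_card_sub_one_eq_one _ η.ne_zero
  have hθ' (v : F) (hv : v ∈ Submodule.span K (Set.range fun k : Fin b ↦ ((η : F) ^ N) ^ (k : ℕ)))
      (hv0 : v ≠ 0) : ∃ i, ∃ y : Kˣ, v = (y : K) • θ i := by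
    obtain ⟨i, ⟨y, hy⟩, -⟩ := hθ v (by simpa only [Set.range, eq_comm] using hv) hv0
    exact ⟨i, y, hy.trans (mul_comm _ _)⟩
  have hcard :
      Nat.card (Fin ((q ^ b - 1) / (q - 1))) * (Nat.card K - 1) = Nat.card K ^ b - 1 := by
    rw [Nat.card_fin, hK]
    exact Nat.div_mul_cancel (by simpa using Nat.sub_dvd_pow_sub_pow q 1 b)
  have hq : (q : ℚ) ≠ 0 := by rw [← hK]; exact_mod_cast Nat.card_pos.ne'
  rw [← Nat.cast_sum, sum_wb_one_eq_pow_mul_wb (Algebra.trace K F) hζ hind hθ' hcard a, hK]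
  push_cast
  field_simp

/-- Eq. (4.9): for the irreducible cyclic code `c(a) = (Tr(a η^{jN}))_j` and a set
`θ_1, …, θ_{(q^b-1)/(q-1)}` of representatives of the `F_q^*`-lines in
`V = ⟨1, η^N, …, η^{(b-1)N}⟩`,
`w_b(c(a)) = q^{-(b-1)} ∑_i w_1(c(θ_i a))`. -/
theorem wb_eq_sum_w1 (q r N n b : ℕ) (hq : IsPrimePow q) (hodd : Odd q)
    (hr : 2 ≤ r) (hre : Even r) (hN : 0 < N) [NeZero n]
    (hnN : n * N = q ^ r - 1) (hb : 2 ≤ b) (hbr : b ≤ r)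
    (F : Type*) [Field F] [Fintype F] (hF : Fintype.card F = q ^ r)
    (K : Subfield F) (hK : Nat.card K = q)
    (η : Fˣ) (hη : ∀ x : Fˣ, x ∈ Subgroup.zpowers η)
    (hind : LinearIndependent ↥K (fun j : Fin b => (η : F) ^ (N * (j : ℕ))))
    (θ : Fin ((q ^ b - 1) / (q - 1)) → F)
    (hθ : ∀ v : F,
      v ∈ Submodule.span ↥K {x : F | ∃ j : Fin b, x = (η : F) ^ (N * (j : ℕ))} →
      v ≠ 0 → ∃! i, ∃ y : Kˣ, v = θ i * ((y : K) : F))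
    (a : F) :
    (wb b (fun j : ZMod n => Algebra.trace ↥K F (a * (η : F) ^ (N * j.val))) : ℚ) =
      (1 / (q : ℚ) ^ (b - 1)) *
        ∑ i, (wb 1 (fun j : ZMod n =>
          Algebra.trace ↥K F (θ i * a * (η : F) ^ (N * j.val))) : ℚ) :=
  wb_eq_sum_w1_general q r N n b hnN F hF K hK η hind θ hθ a
end

section
/- Under the paper's hypotheses, the irreducible cyclic code C = {c(a) : a ∈ F_{q^r}} with b = r is an MDS r-symbol code: |C| = q^r, its minimum r-symbol distance is d_r(C) = n, and q^r = q^{n - d_r(C) + r}. -/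
/-! With `θ = η ^ N`, of order `n`, the codeword `c(a)` is `(Tr(a θ^j))_{j ∈ ℤ/n}`.
Since `n ∣ q ^ s - 1` for `s = [K(θ) : K]`, which divides `r`, a proper `s` would make the
cofactor `(q^r - 1)/(q^s - 1) ≥ q^s + 1 ≥ 3` a common divisor of `(q^r - 1)/(q - 1)` and `N`,
against `gcd = 2`. So `θ` generates `F` over `K` and `1, θ, …, θ^(r-1)` is a `K`-basis of `F`;
nondegeneracy of the trace form then makes `a ↦ c(a)` injective and forbids a nonzero
codeword from vanishing on the `r` consecutive positions `Tr(a θ^i · θ^j)`, `j < r`, so every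
nonzero codeword has `r`-symbol weight `n`. -/

open Module

theorem pow_add_one_le_of_pow_sub_one_eq_mul {q r s A : ℕ} (hq : 2 ≤ q) (hsr : s ∣ r)
    (hlt : s < r) (hA : q ^ r - 1 = (q ^ s - 1) * A) : q ^ s + 1 ≤ A := by
  obtain ⟨c, rfl⟩ := hsr
  have hs : 0 < s := Nat.pos_of_ne_zero fun h => by simp [h] at hlt
  have hc : 2 ≤ c := by
    by_contra! h; interval_cases c <;> simp at hlt
  have hqs : 2 ≤ q ^ s := le_trans hq (Nat.le_self_pow hs.ne' q)
  have hsq : q ^ s * q ^ s ≤ q ^ (s * c) := by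
    rw [← pow_add, ← two_mul, mul_comm 2]; exact Nat.pow_le_pow_right (by omega) (by nlinarith)
  refine Nat.le_of_mul_le_mul_left ?_ (show 0 < q ^ s - 1 by omega)
  rw [← hA]
  generalize q ^ s = x at hqs hsq ⊢
  obtain ⟨y, rfl⟩ : ∃ y, x = y + 1 := ⟨x - 1, by omega⟩
  rw [Nat.add_sub_cancel]
  nlinarith [Nat.sub_add_cancel (show 1 ≤ q ^ (s * c) by nlinarith)]

theorem eq_of_dvd_pow_sub_one_of_gcd_dvd_two {q r s n N : ℕ} (hq : 2 ≤ q) (hn : 0 < n)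
    (hr : 0 < r) (hsr : s ∣ r) (hnN : n * N = q ^ r - 1)
    (hgcd : Nat.gcd ((q ^ r - 1) / (q - 1)) N ∣ 2)
    (hns : n ∣ q ^ s - 1) : s = r := by
  by_contra hne
  have hlt : s < r := (Nat.le_of_dvd hr hsr).lt_of_ne hne
  obtain ⟨A, hA⟩ : q ^ s - 1 ∣ q ^ r - 1 := by
    obtain ⟨c, rfl⟩ := hsr
    simpa [one_pow, pow_mul] using Nat.sub_dvd_pow_sub_pow (q ^ s) 1 c
  obtain ⟨t, ht⟩ := hns
  obtain ⟨u, hu⟩ : q - 1 ∣ q ^ s - 1 := by simpa using Nat.sub_dvd_pow_sub_pow q 1 s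
  have hNA : N = t * A := Nat.eq_of_mul_eq_mul_left hn (by rw [hnN, hA, ht, mul_assoc])
  have hSA : (q ^ r - 1) / (q - 1) = u * A := by
    rw [hA, hu, mul_assoc, Nat.mul_div_cancel_left _ (by omega)]
  have hA2 : A ≤ 2 := Nat.le_of_dvd two_pos <|
    (Nat.dvd_gcd ⟨u, by rw [hSA, mul_comm]⟩ ⟨t, by rw [hNA, mul_comm]⟩).trans hgcd
  have hA3 := pow_add_one_le_of_pow_sub_one_eq_mul hq hsr hlt hA
  have hqs : 1 < q ^ s := Nat.one_lt_pow (Nat.pos_of_dvd_of_pos hsr hr).ne' hq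
  omega

theorem orderOf_dvd_card_pow_natDegree_minpoly_sub_one {K F : Type*} [Field K] [Finite K]
    [Field F] [Algebra K F] {θ : F} (hint : IsIntegral K θ) (hθ : θ ≠ 0) :
    orderOf θ ∣ Nat.card K ^ (minpoly K θ).natDegree - 1 := by
  let E := IntermediateField.adjoin K {θ}
  have : FiniteDimensional K E := IntermediateField.adjoin.finiteDimensional hint
  have : Finite E := Module.finite_of_finite K
  let _ : Fintype E := Fintype.ofFinite E
  have hcard : Fintype.card E = Nat.card K ^ (minpoly K θ).natDegree := by
    rw [Fintype.card_eq_nat_card, Module.natCard_eq_pow_finrank (K := K),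
      IntermediateField.adjoin.finrank hint]
  let θ' : E := ⟨θ, IntermediateField.mem_adjoin_simple_self K θ⟩
  have h := FiniteField.pow_card_sub_one_eq_one θ' (by simpa [θ', ← Subtype.coe_inj] using hθ)
  rw [hcard] at h
  exact orderOf_dvd_of_pow_eq_one (by simpa [θ'] using congrArg Subtype.val h)

theorem eq_zero_of_trace_mul_pow_eq_zero {K F : Type*} [Field K] [Field F] [Algebra K F]
    [FiniteDimensional K F] [Algebra.IsSeparable K F] {θ : F}
    (hθ : (minpoly K θ).natDegree = finrank K F) {b : F}
    (hb : ∀ j < finrank K F, Algebra.trace K F (b * θ ^ j) = 0) : b = 0 := by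
  have : Nonempty (Fin (minpoly K θ).natDegree) := ⟨⟨0, hθ ▸ Module.finrank_pos⟩⟩
  let B := basisOfLinearIndependentOfCardEqFinrank (linearIndependent_pow θ)
    (by rw [Fintype.card_fin, hθ] : Fintype.card (Fin (minpoly K θ).natDegree) = finrank K F)
  have hB : Algebra.traceForm K F b = 0 := B.ext fun i => by
    simpa [B, Algebra.traceForm_apply] using hb i (hθ ▸ i.isLt)
  exact (traceForm_nondegenerate K F).1 b fun x => by rw [hB]; rfl

theorem pow_val_natCast_of_pow_eq_one {M : Type*} [Monoid M] {n : ℕ} {θ : M} (hθ : θ ^ n = 1)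
    (j : ℕ) : θ ^ (j : ZMod n).val = θ ^ j := by
  rw [ZMod.val_natCast, ← pow_eq_pow_mod j hθ]

theorem pow_val_add_of_pow_eq_one {M : Type*} [Monoid M] {n : ℕ} [NeZero n] {θ : M}
    (hθ : θ ^ n = 1) (i j : ZMod n) : θ ^ (i + j).val = θ ^ i.val * θ ^ j.val := by
  rw [ZMod.val_add, ← pow_eq_pow_mod _ hθ, pow_add]

section TraceCode

noncomputable def traceCodeword (K : Type*) {F : Type*} [Field K] [Field F] [Algebra K F]
    (n : ℕ) (θ a : F) : ZMod n → K :=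
  fun j => Algebra.trace K F (a * θ ^ j.val)

variable {K F : Type*} [Field K] [Field F] [Algebra K F] [FiniteDimensional K F]
  [Algebra.IsSeparable K F] {n : ℕ} {θ : F}

theorem traceCodeword_injective (hθn : θ ^ n = 1)
    (hθ : (minpoly K θ).natDegree = finrank K F) :
    Function.Injective (traceCodeword K n θ) := by
  intro a a' h
  rw [← sub_eq_zero]
  refine eq_zero_of_trace_mul_pow_eq_zero hθ fun j _ => ?_
  have hj := congrFun h (j : ZMod n)
  simp only [traceCodeword, pow_val_natCast_of_pow_eq_one hθn] at hj
  rw [sub_mul, map_sub, hj, sub_self]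

theorem pib_traceCodeword_ne_zero [NeZero n] (hθn : θ ^ n = 1)
    (hθ : (minpoly K θ).natDegree = finrank K F) {a : F} (ha : a ≠ 0) (i : ZMod n) :
    pib (finrank K F) (traceCodeword K n θ a) i ≠ 0 := by
  intro hi
  have hθ0 : θ ≠ 0 := by
    rintro rfl; simp [zero_pow (NeZero.ne n)] at hθn
  refine mul_ne_zero ha (pow_ne_zero i.val hθ0) <|
    eq_zero_of_trace_mul_pow_eq_zero hθ fun j hj => ?_
  have hij := congrFun hi ⟨j, hj⟩
  simp only [pib, traceCodeword, Pi.zero_apply, pow_val_add_of_pow_eq_one hθn,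
    pow_val_natCast_of_pow_eq_one hθn] at hij
  rwa [mul_assoc]

theorem wb_traceCodeword [NeZero n] (hθn : θ ^ n = 1)
    (hθ : (minpoly K θ).natDegree = finrank K F) {a : F} (ha : a ≠ 0) :
    wb (finrank K F) (traceCodeword K n θ a) = n := by
  rw [wb, Nat.card_congr (Equiv.subtypeUnivEquiv (pib_traceCodeword_ne_zero hθn hθ ha)),
    Nat.card_zmod]

theorem sInf_wb_traceCodeword [NeZero n] (hθn : θ ^ n = 1)
    (hθ : (minpoly K θ).natDegree = finrank K F) :
    sInf {m | ∃ a : F, a ≠ 0 ∧ wb (finrank K F) (traceCodeword K n θ a) = m} = n := by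
  have : {m | ∃ a : F, a ≠ 0 ∧ wb (finrank K F) (traceCodeword K n θ a) = m} = {n} := by
    ext m
    refine ⟨fun ⟨a, ha, hm⟩ => hm ▸ wb_traceCodeword hθn hθ ha, fun hm => ?_⟩
    exact ⟨1, one_ne_zero, hm ▸ wb_traceCodeword hθn hθ one_ne_zero⟩
  rw [this, csInf_singleton]

end TraceCode

theorem C_is_MDS_r_symbol_general (q r N n : ℕ) (hN : 0 < N) [NeZero n]
    (hnN : n * N = q ^ r - 1)
    (hgcd : Nat.gcd ((q ^ r - 1) / (q - 1)) N = 2)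
    (F : Type*) [Field F] [Fintype F] (hF : Fintype.card F = q ^ r)
    (K : Subfield F) (hK : Nat.card K = q)
    (η : Fˣ) (hη : ∀ x : Fˣ, x ∈ Subgroup.zpowers η) :
    Nat.card (Set.range (fun a : F => fun j : ZMod n =>
        Algebra.trace ↥K F (a * (η : F) ^ (N * j.val)))) = q ^ r ∧
    sInf {m : ℕ | ∃ a : F, a ≠ 0 ∧
        wb r (fun j : ZMod n => Algebra.trace ↥K F (a * (η : F) ^ (N * j.val))) = m} = n ∧
    q ^ r = q ^ (n - n + r) := by
  have hq : 2 ≤ q := hK ▸ Finite.one_lt_card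
  have hr : finrank K F = r := Nat.pow_right_injective hq <| show q ^ _ = q ^ r by
    rw [← hF, Fintype.card_eq_nat_card, Module.natCard_eq_pow_finrank (K := K), hK]
  have hηord : orderOf (η : F) = n * N := by
    rw [orderOf_units, orderOf_eq_card_of_forall_mem_zpowers hη, Nat.card_units,
      Nat.card_eq_fintype_card, hF, hnN]
  set θ := (η : F) ^ N
  have hθ : orderOf θ = n := by
    rw [orderOf_pow_of_dvd hN.ne' (hηord ▸ dvd_mul_left N n), hηord, Nat.mul_div_cancel _ hN]
  have hθn : θ ^ n = 1 := hθ ▸ pow_orderOf_eq_one θ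
  have hint : IsIntegral K θ := .of_finite K θ
  have hdeg : (minpoly K θ).natDegree = finrank K F := by
    rw [hr]
    refine eq_of_dvd_pow_sub_one_of_gcd_dvd_two hq (NeZero.pos n) (hr ▸ finrank_pos)
      (hr ▸ minpoly.degree_dvd hint) hnN (hgcd ▸ dvd_rfl) ?_
    rw [← hθ, ← hK]
    exact orderOf_dvd_card_pow_natDegree_minpoly_sub_one hint (pow_ne_zero N η.ne_zero)
  -- after this, each codeword is `traceCodeword K n θ a` by unfolding
  simp only [pow_mul]
  refine ⟨?_, hr ▸ sInf_wb_traceCodeword hθn hdeg, by rw [Nat.sub_self, zero_add]⟩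
  rw [← hF, ← Nat.card_eq_fintype_card]
  exact Nat.card_range_of_injective (traceCodeword_injective hθn hdeg)

/-- The irreducible cyclic code `C = {c(a)}` is an MDS `r`-symbol code:
`|C| = q^r`, its minimum `r`-symbol distance is `n`, and the Singleton-type bound
`M ≤ q^{n - d_r + r}` is attained with equality. -/
theorem C_is_MDS_r_symbol (q r N n : ℕ) (hq : IsPrimePow q) (hodd : Odd q)
    (hr : 2 ≤ r) (hre : Even r) (hN : 0 < N) [NeZero n]
    (hnN : n * N = q ^ r - 1)
    (hgcd : Nat.gcd ((q ^ r - 1) / (q - 1)) N = 2)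
    (F : Type*) [Field F] [Fintype F] (hF : Fintype.card F = q ^ r)
    (K : Subfield F) (hK : Nat.card K = q)
    (η : Fˣ) (hη : ∀ x : Fˣ, x ∈ Subgroup.zpowers η) :
    Nat.card (Set.range (fun a : F => fun j : ZMod n =>
        Algebra.trace ↥K F (a * (η : F) ^ (N * j.val)))) = q ^ r ∧
    sInf {m : ℕ | ∃ a : F, a ≠ 0 ∧
        wb r (fun j : ZMod n => Algebra.trace ↥K F (a * (η : F) ^ (N * j.val))) = m} = n ∧
    q ^ r = q ^ (n - n + r) :=
  C_is_MDS_r_symbol_general q r N n hN hnN hgcd F hF K hK η hη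
end
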